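/- arXiv:1407.3679 — 5 statements merged into one kernel-verified Lean document; each statement's English description precedes it below -/
import Mathlib

section
/- Let h : [0,1] → ℝ be continuous with modulus of continuity m : ℕ → ℕ (meaning |h(x) - h(y)| ≤ 2^{-k} whenever |x - y| ≤ 2^{-m(k)}), and let g : [0,1] → ℝ be of bounded variation. Then there exists a unique real number I such that for all k ∈ ℕ and every partition Z = (x_0, ..., x_n) of [0,1] with mesh x_i - x_{i-1} < 2^{-m(k+1)}, the Riemann-Stieltjes sum S(g,h,Z) = Σ_{i=1}^n h(x_i)(g(x_i) - g(x_{i-1})) satisfies |I - S(g,h,Z)| ≤ 2^{-k} · Var(g). -/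
/-- A partition of `[0,1]`: `0 = x 0 < x 1 < ... < x n = 1`. -/
def IsPartition (n : ℕ) (x : ℕ → ℝ) : Prop :=
  x 0 = 0 ∧ x n = 1 ∧ ∀ i < n, x i < x (i + 1)

/-- The Riemann-Stieltjes sum `S(g,h,Z) = Σ h(x_i)(g(x_i) - g(x_{i-1}))`. -/
noncomputable def rsSum (g h : ℝ → ℝ) (n : ℕ) (x : ℕ → ℝ) : ℝ :=
  ∑ i ∈ Finset.range n, h (x (i + 1)) * (g (x (i + 1)) - g (x i))

/-!
If `y` refines `x` and consecutive points of `x` are at most `δ` apart, then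
`S(y) - S(x)` is a sum of terms `(h(y_{t+1}) - h(x_{i+1}))(g(y_{t+1}) - g(y_t))` with
`x_i ≤ y_{t+1} ≤ x_{i+1}`, so `|S(y) - S(x)| ≤ ε · Var(g)` when `h` oscillates by at most `ε`
at scale `δ`. Passing through a common refinement, any two partitions of precision `m(k+1)`
have sums within `2^{-k} Var(g)` of each other. Hence the sums along the uniform partitions form
a Cauchy sequence whose limit satisfies the estimate, and two numbers satisfying it are within
`2^{1-k} Var(g)` of each other for every `k`.
-/

open Set Filter Topology
open scoped Finset

theorem Finset.sum_range_sum_Ico {M : Type*} [AddCommMonoid M] (f : ℕ → M) {n : ℕ}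
    {φ : ℕ → ℕ} (hφ : MonotoneOn φ (Set.Iic n)) :
    ∑ i ∈ range n, ∑ t ∈ Ico (φ i) (φ (i + 1)), f t = ∑ t ∈ Ico (φ 0) (φ n), f t := by
  induction n with
  | zero => simp
  | succ n ih =>
    rw [sum_range_succ, ih (hφ.mono (Set.Iic_subset_Iic.2 n.le_succ)),
      sum_Ico_consecutive _ (hφ (by simp) (by simp) n.zero_le)
        (hφ (by simp) (by simp) n.le_succ)]

theorem Finset.exists_monotone_forall_apply_card_filter_lt_eq {α : Type*} [LinearOrder α]
    (F : Finset α) (hF : F.Nonempty) :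
    ∃ y : ℕ → α, Monotone y ∧ (∀ t, y t ∈ F) ∧ ∀ z ∈ F, y #{w ∈ F | w < z} = z := by
  have hk : 0 < #F := hF.card_pos
  set e := F.orderEmbOfFin rfl
  refine ⟨fun t => e ⟨min t (#F - 1), by omega⟩, fun a b hab => e.monotone ?_,
    fun t => F.orderEmbOfFin_mem rfl _, fun z hz => ?_⟩
  · simp only [Fin.mk_le_mk]; omega
  obtain ⟨j, rfl⟩ : z ∈ Set.range e := by rwa [range_orderEmbOfFin]
  have hfilter : F.filter (· < e j) = (Iio j).map e.toEmbedding := by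
    ext w
    constructor
    · intro hw
      obtain ⟨hwF, hwj⟩ := mem_filter.1 hw
      obtain ⟨i, rfl⟩ : w ∈ Set.range e := by rwa [range_orderEmbOfFin]
      exact mem_map_of_mem _ (mem_Iio.2 (e.lt_iff_lt.1 hwj))
    · intro hw
      obtain ⟨i, hi, rfl⟩ := mem_map.1 hw
      exact mem_filter.2 ⟨F.orderEmbOfFin_mem rfl i, e.lt_iff_lt.2 (mem_Iio.1 hi)⟩
  have hcard : #{w ∈ F | w < e j} = j := by rw [hfilter, card_map, Fin.card_Iio]
  simp only [hcard]
  congr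
  omega

structure IsRefinement (φ : ℕ → ℕ) (n : ℕ) (x : ℕ → ℝ) (p : ℕ) (y : ℕ → ℝ) : Prop where
  map_zero : φ 0 = 0
  map_last : φ n = p
  monotoneOn : MonotoneOn φ (Iic n)
  apply_eq : ∀ i ≤ n, y (φ i) = x i

theorem IsRefinement.le_last {φ : ℕ → ℕ} {n p : ℕ} {x y : ℕ → ℝ} (hφ : IsRefinement φ n x p y)
    {i : ℕ} (hi : i ≤ n) : φ i ≤ p :=
  hφ.map_last ▸ hφ.monotoneOn hi self_mem_Iic hi

theorem IsPartition.strictMonoOn {n : ℕ} {x : ℕ → ℝ} (hx : IsPartition n x) :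
    StrictMonoOn x (Iic n) :=
  strictMonoOn_Iic_of_lt_succ hx.2.2

theorem IsPartition.mem_Icc {n : ℕ} {x : ℕ → ℝ} (hx : IsPartition n x) {i : ℕ} (hi : i ≤ n) :
    x i ∈ Icc (0 : ℝ) 1 := by
  have hmono := hx.strictMonoOn.monotoneOn
  refine ⟨?_, ?_⟩
  · simpa [hx.1] using hmono n.zero_le hi i.zero_le
  · simpa [hx.2.1] using hmono hi self_mem_Iic hi

theorem sum_abs_sub_le_eVariationOn_toReal {g : ℝ → ℝ} {s : Set ℝ} (hg : BoundedVariationOn g s)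
    {p : ℕ} {y : ℕ → ℝ} (hy : MonotoneOn y (Iic p)) (hys : ∀ t ≤ p, y t ∈ s) :
    ∑ t ∈ Finset.range p, |g (y (t + 1)) - g (y t)| ≤ (eVariationOn g s).toReal := by
  have hsum := ENNReal.toReal_mono hg (eVariationOn.sum_le_of_monotoneOn_Iic (f := g) hy hys)
  rwa [ENNReal.toReal_sum fun _ _ => edist_ne_top _ _] at hsum

theorem abs_rsSum_sub_rsSum_le_of_isRefinement {s : Set ℝ} {g h : ℝ → ℝ} {δ ε : ℝ}
    (hε : 0 ≤ ε) (hg : BoundedVariationOn g s)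
    (hh : ∀ a ∈ s, ∀ b ∈ s, |a - b| ≤ δ → |h a - h b| ≤ ε)
    {n p : ℕ} {x y : ℕ → ℝ} {φ : ℕ → ℕ} (hy : MonotoneOn y (Iic p)) (hys : ∀ t ≤ p, y t ∈ s)
    (hφ : IsRefinement φ n x p y) (hmesh : ∀ i < n, x (i + 1) - x i ≤ δ) :
    |rsSum g h p y - rsSum g h n x| ≤ ε * (eVariationOn g s).toReal := by
  set Δ : ℕ → ℝ := fun t => g (y (t + 1)) - g (y t)
  have hsplit : ∀ f : ℕ → ℝ,
      ∑ i ∈ Finset.range n, ∑ t ∈ Finset.Ico (φ i) (φ (i + 1)), f t = ∑ t ∈ Finset.range p, f t :=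
    fun f => by rw [Finset.sum_range_sum_Ico f hφ.monotoneOn, hφ.map_zero, hφ.map_last,
      Finset.range_eq_Ico]
  have hφ_step : ∀ i < n, φ i ≤ φ (i + 1) := fun i hi =>
    hφ.monotoneOn (mem_Iic.2 hi.le) (mem_Iic.2 hi) i.le_succ
  have hclose : ∀ i < n, ∀ t ∈ Finset.Ico (φ i) (φ (i + 1)),
      |h (y (t + 1)) - h (x (i + 1))| ≤ ε := by
    intro i hi t ht
    obtain ⟨hit, hti⟩ := Finset.mem_Ico.1 ht
    have hip : φ (i + 1) ≤ p := hφ.le_last hi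
    have hlo : x i ≤ y (t + 1) := hφ.apply_eq i hi.le ▸
      hy (mem_Iic.2 ((hφ_step i hi).trans hip)) (mem_Iic.2 (hti.trans_le hip)) (by omega)
    have hup : y (t + 1) ≤ x (i + 1) := hφ.apply_eq (i + 1) hi ▸
      hy (mem_Iic.2 (hti.trans_le hip)) (mem_Iic.2 hip) hti
    refine hh _ (hys _ (hti.trans_le hip)) _ (hφ.apply_eq (i + 1) hi ▸ hys _ hip) ?_
    rw [abs_of_nonpos (by linarith)]
    linarith [hmesh i hi]
  have hdiff : rsSum g h p y - rsSum g h n x = ∑ i ∈ Finset.range n,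
      ∑ t ∈ Finset.Ico (φ i) (φ (i + 1)), (h (y (t + 1)) - h (x (i + 1))) * Δ t := by
    have hΔ : ∀ i < n, g (x (i + 1)) - g (x i) = ∑ t ∈ Finset.Ico (φ i) (φ (i + 1)), Δ t :=
      fun i hi => by
        rw [Finset.sum_Ico_sub (fun t => g (y t)) (hφ_step i hi), hφ.apply_eq _ hi,
          hφ.apply_eq _ hi.le]
    rw [rsSum, rsSum, ← hsplit, ← Finset.sum_sub_distrib]
    refine Finset.sum_congr rfl fun i hi => ?_
    rw [hΔ i (Finset.mem_range.1 hi), Finset.mul_sum, ← Finset.sum_sub_distrib]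
    exact Finset.sum_congr rfl fun t _ => by ring
  calc |rsSum g h p y - rsSum g h n x|
      ≤ ∑ i ∈ Finset.range n, ∑ t ∈ Finset.Ico (φ i) (φ (i + 1)), ε * |Δ t| := by
        rw [hdiff]
        refine (Finset.abs_sum_le_sum_abs _ _).trans (Finset.sum_le_sum fun i hi => ?_)
        refine (Finset.abs_sum_le_sum_abs _ _).trans (Finset.sum_le_sum fun t ht => ?_)
        rw [abs_mul]
        exact mul_le_mul_of_nonneg_right (hclose i (Finset.mem_range.1 hi) t ht) (abs_nonneg _)
    _ = ε * ∑ t ∈ Finset.range p, |Δ t| := by rw [hsplit, Finset.mul_sum]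
    _ ≤ ε * (eVariationOn g s).toReal :=
        mul_le_mul_of_nonneg_left (sum_abs_sub_le_eVariationOn_toReal hg hy hys) hε

theorem IsPartition.isRefinement_of_forall_mem {F : Finset ℝ} (hF : ∀ z ∈ F, z ∈ Icc (0 : ℝ) 1)
    {y : ℕ → ℝ} (hy : ∀ z ∈ F, y #{w ∈ F | w < z} = z) {n : ℕ} {x : ℕ → ℝ}
    (hx : IsPartition n x) (hxF : ∀ i ≤ n, x i ∈ F) :
    IsRefinement (fun i => #{w ∈ F | w < x i}) n x (#F - 1) y where
  map_zero := by
    simp only [hx.1, Finset.card_eq_zero, Finset.filter_eq_empty_iff, not_lt]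
    exact fun w hw => (hF w hw).1
  map_last := by
    have h1F : (1 : ℝ) ∈ F := hx.2.1 ▸ hxF n le_rfl
    rw [hx.2.1, Finset.filter_congr fun w hw => (hF w hw).2.lt_iff_ne, Finset.filter_ne',
      Finset.card_erase_of_mem h1F]
  monotoneOn := fun i hi j hj hij => Finset.card_le_card <| Finset.monotone_filter_right F
    fun _ _ hw => hw.trans_le (hx.strictMonoOn.monotoneOn hi hj hij)
  apply_eq := fun i hi => hy _ (hxF i hi)

theorem IsPartition.exists_common_refinement {n n' : ℕ} {x x' : ℕ → ℝ} (hx : IsPartition n x)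
    (hx' : IsPartition n' x') :
    ∃ (p : ℕ) (y : ℕ → ℝ) (φ φ' : ℕ → ℕ), Monotone y ∧ (∀ t, y t ∈ Icc (0 : ℝ) 1) ∧
      IsRefinement φ n x p y ∧ IsRefinement φ' n' x' p y := by
  set F := (Finset.range (n + 1)).image x ∪ (Finset.range (n' + 1)).image x'
  have hxF : ∀ i ≤ n, x i ∈ F := fun i hi =>
    Finset.mem_union_left _ (Finset.mem_image_of_mem x (Finset.mem_range.2 (by omega)))
  have hx'F : ∀ i ≤ n', x' i ∈ F := fun i hi =>
    Finset.mem_union_right _ (Finset.mem_image_of_mem x' (Finset.mem_range.2 (by omega)))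
  have hF : ∀ z ∈ F, z ∈ Icc (0 : ℝ) 1 := by
    simp only [F, Finset.mem_union, Finset.mem_image, Finset.mem_range]
    rintro z (⟨i, hi, rfl⟩ | ⟨i, hi, rfl⟩)
    exacts [hx.mem_Icc (by omega), hx'.mem_Icc (by omega)]
  obtain ⟨y, hy, hyF, hyF_inv⟩ :=
    F.exists_monotone_forall_apply_card_filter_lt_eq ⟨x 0, hxF 0 n.zero_le⟩
  exact ⟨_, y, _, _, hy, fun t => hF _ (hyF t), hx.isRefinement_of_forall_mem hF hyF_inv hxF,
    hx'.isRefinement_of_forall_mem hF hyF_inv hx'F⟩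

theorem IsPartition.abs_rsSum_sub_rsSum_le {g h : ℝ → ℝ} {δ ε : ℝ} (hε : 0 ≤ ε)
    (hg : BoundedVariationOn g (Icc 0 1))
    (hh : ∀ a ∈ Icc (0 : ℝ) 1, ∀ b ∈ Icc (0 : ℝ) 1, |a - b| ≤ δ → |h a - h b| ≤ ε)
    {n n' : ℕ} {x x' : ℕ → ℝ} (hx : IsPartition n x) (hx' : IsPartition n' x')
    (hmesh : ∀ i < n, x (i + 1) - x i ≤ δ) (hmesh' : ∀ i < n', x' (i + 1) - x' i ≤ δ) :
    |rsSum g h n x - rsSum g h n' x'| ≤ 2 * ε * (eVariationOn g (Icc 0 1)).toReal := by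
  obtain ⟨p, y, φ, φ', hy, hys, hφ, hφ'⟩ := hx.exists_common_refinement hx'
  have hxy := abs_rsSum_sub_rsSum_le_of_isRefinement hε hg hh (hy.monotoneOn _)
    (fun t _ => hys t) hφ hmesh
  have hx'y := abs_rsSum_sub_rsSum_le_of_isRefinement hε hg hh (hy.monotoneOn _)
    (fun t _ => hys t) hφ' hmesh'
  calc |rsSum g h n x - rsSum g h n' x'|
      ≤ |rsSum g h p y - rsSum g h n x| + |rsSum g h p y - rsSum g h n' x'| := by
        rw [abs_sub_comm (rsSum g h p y)]; exact abs_sub_le _ _ _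
    _ ≤ 2 * ε * (eVariationOn g (Icc 0 1)).toReal := by linarith

theorem existsUnique_forall_abs_sub_le {α : Type*} {S : α → ℝ} {P : ℕ → α → Prop} {c : ℕ → ℝ}
    (hc : Tendsto c atTop (𝓝 0)) (u : ℕ → α) (hu : ∀ k, ∀ᶠ N in atTop, P k (u N))
    (hS : ∀ k a b, P k a → P k b → |S a - S b| ≤ c k) :
    ∃! I : ℝ, ∀ k a, P k a → |I - S a| ≤ c k := by
  have hcauchy : CauchySeq (S ∘ u) := by
    refine Metric.cauchySeq_iff'.2 fun ε hε => ?_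
    obtain ⟨k, hk⟩ := (hc.eventually (gt_mem_nhds hε)).exists
    obtain ⟨N, hN⟩ := eventually_atTop.1 (hu k)
    exact ⟨N, fun j hj => (hS k _ _ (hN j hj) (hN N le_rfl)).trans_lt hk⟩
  obtain ⟨I, hI⟩ := cauchySeq_tendsto_of_complete hcauchy
  have hbound : ∀ k a, P k a → |I - S a| ≤ c k := fun k a ha =>
    le_of_tendsto ((hI.sub_const (S a)).abs) ((hu k).mono fun N hN => hS k _ _ hN ha)
  refine ⟨I, hbound, fun J hJ => eq_of_forall_dist_le fun ε hε => ?_⟩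
  obtain ⟨k, hk⟩ := (hc.eventually (gt_mem_nhds (half_pos hε))).exists
  obtain ⟨N, hN⟩ := (hu k).exists
  have hJN := hJ k _ hN
  have hIN := hbound k _ hN
  rw [Real.dist_eq]
  calc |J - I| ≤ |J - S (u N)| + |S (u N) - I| := abs_sub_le _ _ _
    _ ≤ ε := by rw [abs_sub_comm (S (u N))]; linarith

noncomputable def uniformPartition (N i : ℕ) : ℝ := i / (N + 1)

theorem uniformPartition_succ_sub (N i : ℕ) :
    uniformPartition N (i + 1) - uniformPartition N i = 1 / (N + 1) := by
  simp only [uniformPartition, Nat.cast_succ]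
  ring

theorem isPartition_uniformPartition (N : ℕ) : IsPartition (N + 1) (uniformPartition N) := by
  refine ⟨by simp [uniformPartition], ?_, fun i _ => ?_⟩
  · simp only [uniformPartition, Nat.cast_succ]
    exact div_self (by positivity)
  · rw [← sub_pos, uniformPartition_succ_sub]
    positivity

theorem two_mul_two_zpow_neg_succ (k : ℕ) :
    2 * (2 : ℝ) ^ (-((k + 1 : ℕ) : ℤ)) = 2 ^ (-(k : ℤ)) := by
  rw [Nat.cast_succ, neg_add, zpow_add₀ two_ne_zero, zpow_neg_one]
  ring

theorem tendsto_two_zpow_neg_mul_atTop (C : ℝ) :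
    Tendsto (fun k : ℕ => (2 : ℝ) ^ (-(k : ℤ)) * C) atTop (𝓝 0) := by
  simpa only [zpow_neg, zpow_natCast, Function.comp_def, zero_mul] using
    (tendsto_inv_atTop_zero.comp (tendsto_pow_atTop_atTop_of_one_lt one_lt_two)).mul_const C

theorem riemann_stieltjes_exists_unique_general (h g : ℝ → ℝ) (m : ℕ → ℕ)
    (hbv : BoundedVariationOn g (Set.Icc 0 1))
    (hm : ∀ k : ℕ, ∀ x ∈ Set.Icc (0:ℝ) 1, ∀ y ∈ Set.Icc (0:ℝ) 1,
      |x - y| ≤ (2:ℝ) ^ (-(m k : ℤ)) → |h x - h y| ≤ (2:ℝ) ^ (-(k : ℤ))) :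
    ∃! I : ℝ, ∀ (k n : ℕ) (x : ℕ → ℝ), IsPartition n x →
      (∀ i < n, x (i + 1) - x i < (2:ℝ) ^ (-(m (k + 1) : ℤ))) →
      |I - rsSum g h n x| ≤ (2:ℝ) ^ (-(k : ℤ)) * variationOnFromTo g (Set.Icc 0 1) 0 1 := by
  rw [variationOnFromTo.eq_of_le g _ zero_le_one, Set.inter_self]
  have hfine : ∀ k, ∀ᶠ N in atTop, IsPartition (N + 1) (uniformPartition N) ∧
      ∀ i < N + 1, uniformPartition N (i + 1) - uniformPartition N i < 2 ^ (-(m (k + 1) : ℤ)) :=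
    fun k => (tendsto_one_div_add_atTop_nhds_zero_nat.eventually (gt_mem_nhds (zpow_pos two_pos _))).mono
      fun N hN => ⟨isPartition_uniformPartition N, fun i _ => by rwa [uniformPartition_succ_sub]⟩
  have hS := existsUnique_forall_abs_sub_le (S := fun a : ℕ × (ℕ → ℝ) => rsSum g h a.1 a.2)
    (P := fun k a => IsPartition a.1 a.2 ∧ ∀ i < a.1, a.2 (i + 1) - a.2 i < 2 ^ (-(m (k + 1) : ℤ)))
    (tendsto_two_zpow_neg_mul_atTop _)
    (fun N => (N + 1, uniformPartition N)) hfine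
    fun k a b ⟨ha, ha_mesh⟩ ⟨hb, hb_mesh⟩ => by
      simpa only [two_mul_two_zpow_neg_succ] using
        ha.abs_rsSum_sub_rsSum_le (by positivity) hbv (hm (k + 1)) hb
          (fun i hi => (ha_mesh i hi).le) (fun i hi => (hb_mesh i hi).le)
  simpa only [Prod.forall, and_imp] using hS

/-- For continuous h with modulus of continuity m and g of bounded
variation there is a unique I with |I - S(g,h,Z)| ≤ 2^{-k} Var(g) for every k and
every partition Z of precision m(k+1). -/
theorem riemann_stieltjes_exists_unique (h g : ℝ → ℝ) (m : ℕ → ℕ)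
    (hc : ContinuousOn h (Set.Icc 0 1))
    (hbv : BoundedVariationOn g (Set.Icc 0 1))
    (hm : ∀ k : ℕ, ∀ x ∈ Set.Icc (0:ℝ) 1, ∀ y ∈ Set.Icc (0:ℝ) 1,
      |x - y| ≤ (2:ℝ) ^ (-(m k : ℤ)) → |h x - h y| ≤ (2:ℝ) ^ (-(k : ℤ))) :
    ∃! I : ℝ, ∀ (k n : ℕ) (x : ℕ → ℝ), IsPartition n x →
      (∀ i < n, x (i + 1) - x i < (2:ℝ) ^ (-(m (k + 1) : ℤ))) →
      |I - rsSum g h n x| ≤ (2:ℝ) ^ (-(k : ℤ)) * variationOnFromTo g (Set.Icc 0 1) 0 1 :=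
  riemann_stieltjes_exists_unique_general h g m hbv hm
end

section
/- Let g₁, g₂ : [0,1] → ℝ be functions of bounded variation that agree at 0, at 1, and on a dense subset X of (0,1). Then ∫ h dg₁ = ∫ h dg₂ for every continuous h : [0,1] → ℝ. -/
/-- `I` is the Riemann-Stieltjes integral `∫ h dg` over `[0,1]`: the limit of the
Riemann-Stieltjes sums over partitions of vanishing mesh. -/
def RSIntegralEq (h g : ℝ → ℝ) (I : ℝ) : Prop :=
  ∀ ε > (0:ℝ), ∃ δ > (0:ℝ), ∀ (n : ℕ) (x : ℕ → ℝ), IsPartition n x →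
    (∀ i < n, x (i + 1) - x i < δ) → |I - rsSum g h n x| < ε

/-- Auxiliary: for any `δ > 0` there is a partition of mesh `< δ` all of whose points
lie in `X ∪ {0, 1}`. -/
lemma exists_partition_in_dense (X : Set ℝ) (hX : X ⊆ Set.Ioo 0 1)
    (hdense : ∀ x ∈ Set.Ioo (0:ℝ) 1, x ∈ closure X) {δ : ℝ} (hδ : 0 < δ) :
    ∃ (n : ℕ) (x : ℕ → ℝ), IsPartition n x ∧ (∀ i < n, x (i + 1) - x i < δ) ∧
      ∀ i ≤ n, x i = 0 ∨ x i = 1 ∨ x i ∈ X := by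
  obtain ⟨N, hN⟩ := exists_nat_gt (2 / δ)
  have hN0 : 0 < N := by
    by_contra hcon
    push_neg at hcon
    interval_cases N
    · simp at hN
      have : 0 < 2 / δ := by positivity
      linarith
  have Nr : (0:ℝ) < (N:ℝ) := by exact_mod_cast hN0
  have h2N : 2 / (N:ℝ) < δ := by
    rw [div_lt_iff₀ Nr]
    rw [div_lt_iff₀ hδ] at hN
    linarith [hN]
  have hch : ∀ k : ℕ, 0 < k → k < N → ∃ y, y ∈ X ∧ |(k:ℝ)/N - y| < 1/(4*N) := by
    intro k hk1 hk2
    have hmem : (k:ℝ)/N ∈ Set.Ioo (0:ℝ) 1 := by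
      constructor
      · apply div_pos _ Nr; exact_mod_cast hk1
      · rw [div_lt_one Nr]; exact_mod_cast hk2
    have hcl := hdense _ hmem
    rw [Metric.mem_closure_iff] at hcl
    obtain ⟨y, hy, hd⟩ := hcl (1/(4*N)) (by positivity)
    exact ⟨y, hy, by simpa [Real.dist_eq] using hd⟩
  classical
  set x : ℕ → ℝ := fun k => if hk : 0 < k ∧ k < N then (hch k hk.1 hk.2).choose
    else if k = 0 then 0 else 1 with hxdef
  have hxX : ∀ k, (hk : 0 < k ∧ k < N) → x k ∈ X ∧ |(k:ℝ)/N - x k| < 1/(4*N) := by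
    intro k hk
    have := (hch k hk.1 hk.2).choose_spec
    simp only [hxdef, dif_pos hk]
    exact this
  have hx0 : x 0 = 0 := by simp [hxdef]
  have hxN : x N = 1 := by
    simp only [hxdef]
    rw [dif_neg (by omega), if_neg (by omega)]
  have hb : ∀ k ≤ N, |x k - (k:ℝ)/N| < 1/(4*N) := by
    intro k hk
    rcases Nat.eq_zero_or_pos k with hk0 | hk1
    · subst hk0
      rw [hx0]
      simp
      positivity
    rcases eq_or_lt_of_le hk with hkN | hkN
    · subst hkN
      rw [hxN, div_self (ne_of_gt Nr)]
      simp
      positivity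
    · have := (hxX k ⟨hk1, hkN⟩).2
      rwa [abs_sub_comm]
  have hq : (0:ℝ) < 1/(4*(N:ℝ)) := by positivity
  have hstep : ∀ i < N, x i < x (i+1) ∧ x (i+1) - x i < δ := by
    intro i hi
    have hbi := hb i (le_of_lt hi)
    have hbi1 := hb (i+1) (by omega)
    rw [abs_lt] at hbi hbi1
    have hcast : ((i+1:ℕ):ℝ)/N = (i:ℝ)/N + 1/N := by push_cast; ring
    rw [hcast] at hbi1
    have hlt : (3/2:ℝ)/N < 2/N := by gcongr; norm_num
    have h1N : (1:ℝ)/(2*N) < 1/N - 2*(1/(4*(N:ℝ))) + 1/(2*N) + 1/(2*N) := by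
      rw [show (1:ℝ)/N - 2*(1/(4*(N:ℝ))) = 1/(2*N) by ring]
      have : (0:ℝ) < 1/(2*(N:ℝ)) := by positivity
      linarith
    constructor
    · have : (0:ℝ) < 1/N - 2*(1/(4*(N:ℝ))) := by
        rw [show (1:ℝ)/N - 2*(1/(4*(N:ℝ))) = 1/(2*N) by ring]
        positivity
      linarith [hbi.2, hbi1.1]
    · have : x (i+1) - x i < 1/N + 2*(1/(4*(N:ℝ))) := by
        linarith [hbi.1, hbi1.2]
      have heq : (1:ℝ)/N + 2*(1/(4*(N:ℝ))) = (3/2)/N := by ring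
      linarith [hlt, h2N]
  refine ⟨N, x, ⟨hx0, hxN, fun i hi => (hstep i hi).1⟩, fun i hi => (hstep i hi).2, ?_⟩
  intro i hi
  rcases Nat.eq_zero_or_pos i with hi0 | hi1
  · subst hi0; left; exact hx0
  rcases eq_or_lt_of_le hi with hiN | hiN
  · subst hiN; right; left; exact hxN
  · right; right; exact (hxX i ⟨hi1, hiN⟩).1

/-- If g₁, g₂ are of bounded variation and agree at 0, at 1 and on a
dense subset X of (0,1), then ∫ h dg₁ = ∫ h dg₂ for every continuous h. -/
theorem rs_integral_eq_of_agree_on_dense (g₁ g₂ : ℝ → ℝ) (X : Set ℝ)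
    (hbv₁ : BoundedVariationOn g₁ (Set.Icc 0 1))
    (hbv₂ : BoundedVariationOn g₂ (Set.Icc 0 1))
    (hX : X ⊆ Set.Ioo 0 1)
    (hdense : ∀ x ∈ Set.Ioo (0:ℝ) 1, x ∈ closure X)
    (h0 : g₁ 0 = g₂ 0) (h1 : g₁ 1 = g₂ 1)
    (hagree : ∀ x ∈ X, g₁ x = g₂ x) :
    ∀ h : ℝ → ℝ, ContinuousOn h (Set.Icc 0 1) →
      ∀ I₁ I₂ : ℝ, RSIntegralEq h g₁ I₁ → RSIntegralEq h g₂ I₂ → I₁ = I₂ := by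
  intro h hc I₁ I₂ hI₁ hI₂
  apply eq_of_forall_dist_le
  intro ε hε
  obtain ⟨δ₁, hδ₁, hH₁⟩ := hI₁ (ε/2) (by linarith)
  obtain ⟨δ₂, hδ₂, hH₂⟩ := hI₂ (ε/2) (by linarith)
  obtain ⟨n, x, hpart, hmesh, hmem⟩ := exists_partition_in_dense X hX hdense
    (lt_min hδ₁ hδ₂)
  have gEq : ∀ j ≤ n, g₁ (x j) = g₂ (x j) := by
    intro j hj
    rcases hmem j hj with hj' | hj' | hj'
    · rw [hj', h0]
    · rw [hj', h1]
    · exact hagree _ hj'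
  have Seq : rsSum g₁ h n x = rsSum g₂ h n x := by
    unfold rsSum
    apply Finset.sum_congr rfl
    intro i hi
    rw [Finset.mem_range] at hi
    rw [gEq i (le_of_lt hi), gEq (i+1) (by omega)]
  have hA := hH₁ n x hpart (fun i hi => lt_of_lt_of_le (hmesh i hi) (min_le_left _ _))
  have hB := hH₂ n x hpart (fun i hi => lt_of_lt_of_le (hmesh i hi) (min_le_right _ _))
  rw [Seq] at hA
  rw [Real.dist_eq]
  have htri : |I₁ - I₂| ≤ |I₁ - rsSum g₂ h n x| + |rsSum g₂ h n x - I₂| :=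
    abs_sub_le _ _ _
  rw [abs_sub_comm (rsSum g₂ h n x) I₂] at htri
  linarith
end

section
/- For every g in BV (normalized function of bounded variation on [0,1]), the operator norm of the functional F_g : C[0,1] → ℝ defined by F_g(h) = ∫ h dg equals the total variation: ‖F_g‖ = Var(g). -/
/-!
Write `Φ y = Var(g; 0, y)`, so that `|g v - g u| ≤ Φ v - Φ u` for `u ≤ v`. Every Riemann–Stieltjes
sum of `h` with `|h| ≤ 1` is bounded by `∑ |Δg| ≤ Φ 1`, which gives `‖F_g‖ ≤ Var g`.

Conversely, when `h` is a primitive of a bounded `φ`, Abel summation rewrites a Riemann–Stieltjes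
sum as `h 1 * g 1 - h 0 * g 0 - ∑ g xᵢ * ∫_{xᵢ}^{xᵢ₊₁} φ`, which differs from the same expression
with `∫₀¹ g φ` by at most `sup |φ| * mesh * Φ 1`; so `∫ h dg` exists. Given a partition `t`, take
`h` equal to `sign (g tₖ₊₁ - g tₖ)` on `(tₖ, tₖ₊₁ - η)` and affine on the short intervals
`[tₖ - η, tₖ]`. Then `∫ h dg` is an explicit combination of the averages `η⁻¹ ∫_{tₖ-η}^{tₖ} g`,
which tend to `g tₖ` by left continuity, so `∫ h dg → ∑ |g tₖ₊₁ - g tₖ|` as `η → 0`.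
-/

open Set Filter Topology MeasureTheory

namespace IsPartition

variable {n : ℕ} {x : ℕ → ℝ}

theorem strictMonoOn_s7 (hx : IsPartition n x) : StrictMonoOn x (Iic n) := by
  intro i _ j hj hij
  induction j, hij using Nat.le_induction with
  | base => exact hx.2.2 i (by simp at hj; omega)
  | succ j hij ih => exact (ih (by simp at hj ⊢; omega)).trans (hx.2.2 j (by simp at hj; omega))

theorem monotoneOn (hx : IsPartition n x) : MonotoneOn x (Iic n) :=
  hx.strictMonoOn_s7.monotoneOn

theorem mem_Icc_s7 (hx : IsPartition n x) {i : ℕ} (hi : i ≤ n) : x i ∈ Icc 0 1 := by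
  constructor
  · simpa [hx.1] using hx.monotoneOn (by simp) (by simpa using hi) (Nat.zero_le i)
  · simpa [hx.2.1] using hx.monotoneOn (by simpa using hi) (by simp) hi

theorem mem_Ioo (hx : IsPartition n x) {i : ℕ} (hi₀ : 0 < i) (hi : i < n) : x i ∈ Ioo 0 1 :=
  ⟨hx.1 ▸ hx.strictMonoOn_s7 (by simp) (by simp; omega) hi₀,
    hx.2.1 ▸ hx.strictMonoOn_s7 (by simp; omega) (by simp) hi⟩

theorem intervalIntegrable {f : ℝ → ℝ} (hx : IsPartition n x) (hf : IntervalIntegrable f volume 0 1)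
    {i j : ℕ} (hi : i ≤ n) (hj : j ≤ n) : IntervalIntegrable f volume (x i) (x j) :=
  hf.mono_set <| by
    rw [uIcc_of_le zero_le_one]; exact uIcc_subset_Icc (hx.mem_Icc_s7 hi) (hx.mem_Icc_s7 hj)

theorem sum_sub (hx : IsPartition n x) (f : ℝ → ℝ) :
    ∑ i ∈ Finset.range n, (f (x (i + 1)) - f (x i)) = f 1 - f 0 := by
  rw [Finset.sum_range_sub (fun i => f (x i)), hx.1, hx.2.1]

end IsPartition

theorem exists_isPartition_mesh_lt {δ : ℝ} (hδ : 0 < δ) :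
    ∃ n x, IsPartition n x ∧ ∀ i < n, x (i + 1) - x i < δ := by
  obtain ⟨n, hn⟩ := exists_nat_gt δ⁻¹
  have hn0 : (0 : ℝ) < n := (inv_pos.2 hδ).trans hn
  refine ⟨n, fun i => i / n, ⟨by simp, by simp [hn0.ne'], fun i _ => ?_⟩, fun i _ => ?_⟩
  · exact div_lt_div_of_pos_right (by push_cast; linarith) hn0
  · rw [← sub_div, Nat.cast_succ, add_sub_cancel_left, one_div_lt hn0 hδ, one_div]
    exact hn

theorem exists_isPartition_image_eq (F : Finset ℝ) (hF : ∀ y ∈ F, y ∈ Icc (0 : ℝ) 1)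
    (h0 : (0 : ℝ) ∈ F) (h1 : (1 : ℝ) ∈ F) :
    ∃ M t, IsPartition M t ∧ Monotone t ∧ t '' Iic M = F := by
  have hcard : F.card = F.card - 1 + 1 := (Nat.sub_add_cancel (Finset.card_pos.2 ⟨0, h0⟩)).symm
  set M := F.card - 1
  refine ⟨M, fun k => F.orderEmbOfFin hcard ⟨min k M, by omega⟩, ⟨?_, ?_, fun k hk => ?_⟩, ?_, ?_⟩
  · simp only [Nat.zero_min, Finset.orderEmbOfFin_zero hcard (Nat.succ_pos _)]
    exact le_antisymm (F.min'_le 0 h0) (F.le_min' _ _ fun y hy => (hF y hy).1)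
  · have := Finset.orderEmbOfFin_last hcard (Nat.succ_pos M)
    simp only [Nat.add_sub_cancel] at this
    simp only [min_self, this]
    exact le_antisymm (F.max'_le _ _ fun y hy => (hF y hy).2) (F.le_max' 1 h1)
  · exact (F.orderEmbOfFin hcard).strictMono (by simp [Fin.lt_def]; omega)
  · exact fun i j hij => (F.orderEmbOfFin hcard).monotone (by simp [Fin.le_def]; omega)
  · rw [← Finset.range_orderEmbOfFin F hcard]
    ext y
    simp only [mem_image, mem_Iic, mem_range]
    constructor
    · rintro ⟨k, -, rfl⟩; exact ⟨_, rfl⟩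
    · rintro ⟨⟨k, hk⟩, rfl⟩
      exact ⟨k, by omega, by simp only [show min k M = k by omega]⟩

section Variation

variable {g : ℝ → ℝ}

theorem IsPartition.sum_abs_sub_le_variationOnFromTo (hg : BoundedVariationOn g (Icc 0 1))
    {n : ℕ} {x : ℕ → ℝ} (hx : IsPartition n x) :
    ∑ i ∈ Finset.range n, |g (x (i + 1)) - g (x i)| ≤ variationOnFromTo g (Icc 0 1) 0 1 := by
  have h0 : (0 : ℝ) ∈ Icc (0 : ℝ) 1 := ⟨le_rfl, zero_le_one⟩
  calc ∑ i ∈ Finset.range n, |g (x (i + 1)) - g (x i)|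
      ≤ ∑ i ∈ Finset.range n, (variationOnFromTo g (Icc 0 1) 0 (x (i + 1))
          - variationOnFromTo g (Icc 0 1) 0 (x i)) := by
        refine Finset.sum_le_sum fun i hi => ?_
        have hi : i < n := Finset.mem_range.1 hi
        exact variationOnFromTo.abs_sub_le_sub_of_le hg.locallyBoundedVariationOn h0
          (hx.mem_Icc_s7 hi.le) (hx.mem_Icc_s7 hi) (hx.2.2 i hi).le
    _ = variationOnFromTo g (Icc 0 1) 0 1 := by
        rw [hx.sum_sub, variationOnFromTo.self, sub_zero]

theorem variationOnFromTo_le_of_forall_isPartition {C : ℝ}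
    (hC : ∀ M t, IsPartition M t → ∑ k ∈ Finset.range M, |g (t (k + 1)) - g (t k)| ≤ C) :
    variationOnFromTo g (Icc 0 1) 0 1 ≤ C := by
  classical
  have hC0 : 0 ≤ C := (abs_nonneg _).trans <| by
    simpa using hC 1 (fun k => k) ⟨by simp, by simp, by simp⟩
  rw [variationOnFromTo.eq_of_le _ _ zero_le_one, inter_self]
  refine ENNReal.toReal_le_of_le_ofReal hC0 (iSup_le ?_)
  rintro ⟨n, u, hu, hus⟩
  obtain ⟨M, t, ht, ht_mono, himage⟩ := exists_isPartition_image_eq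
    (insert 0 (insert 1 ((Finset.range (n + 1)).image u)))
    (by simp only [Finset.mem_insert, Finset.mem_image]
        rintro y (rfl | rfl | ⟨i, -, rfl⟩)
        exacts [⟨le_rfl, zero_le_one⟩, ⟨zero_le_one, le_rfl⟩, hus i])
    (by simp) (by simp)
  have hsub : u '' Iic n ⊆ t '' Iic M := by
    rw [himage]
    rintro _ ⟨i, hi, rfl⟩
    simp only [Finset.coe_insert, Finset.coe_image, Finset.coe_range]
    exact Or.inr (Or.inr ⟨i, by simpa [Nat.lt_succ_iff] using hi, rfl⟩)
  have hedist : ∀ a b : ℝ, edist (g a) (g b) = ENNReal.ofReal |g b - g a| := fun a b => by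
    rw [edist_dist, Real.dist_eq, abs_sub_comm]
  calc ∑ i ∈ Finset.range n, edist (g (u (i + 1))) (g (u i))
      = eVariationOn g (u '' Iic n) := by
        rw [eVariationOn.image_range_of_monotone _ hu]
        simp_rw [edist_comm]
    _ ≤ eVariationOn g (t '' Iic M) := eVariationOn.mono _ hsub
    _ = ENNReal.ofReal (∑ k ∈ Finset.range M, |g (t (k + 1)) - g (t k)|) := by
        rw [eVariationOn.image_range_of_monotone _ ht_mono,
          ENNReal.ofReal_sum_of_nonneg fun k _ => abs_nonneg _]
        simp_rw [hedist]
    _ ≤ ENNReal.ofReal C := ENNReal.ofReal_le_ofReal (hC M t ht)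

end Variation

section RSIntegral

variable {g h h₁ h₂ : ℝ → ℝ} {I I₁ I₂ : ℝ}

theorem RSIntegralEq.add (hI₁ : RSIntegralEq h₁ g I₁) (hI₂ : RSIntegralEq h₂ g I₂) :
    RSIntegralEq (fun y => h₁ y + h₂ y) g (I₁ + I₂) := by
  intro ε hε
  obtain ⟨δ₁, hδ₁, H₁⟩ := hI₁ (ε / 2) (half_pos hε)
  obtain ⟨δ₂, hδ₂, H₂⟩ := hI₂ (ε / 2) (half_pos hε)
  refine ⟨min δ₁ δ₂, lt_min hδ₁ hδ₂, fun n x hx hmesh => ?_⟩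
  have e₁ := H₁ n x hx fun i hi => (hmesh i hi).trans_le (min_le_left _ _)
  have e₂ := H₂ n x hx fun i hi => (hmesh i hi).trans_le (min_le_right _ _)
  have hsum : rsSum g (fun y => h₁ y + h₂ y) n x = rsSum g h₁ n x + rsSum g h₂ n x := by
    simp only [rsSum, add_mul, Finset.sum_add_distrib]
  rw [hsum, add_sub_add_comm]
  linarith [abs_add_le (I₁ - rsSum g h₁ n x) (I₂ - rsSum g h₂ n x)]

theorem RSIntegralEq.const_mul (hI : RSIntegralEq h g I) (c : ℝ) :
    RSIntegralEq (fun y => c * h y) g (c * I) := by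
  intro ε hε
  obtain ⟨δ, hδ, H⟩ := hI (ε / (|c| + 1)) (by positivity)
  refine ⟨δ, hδ, fun n x hx hmesh => ?_⟩
  have hsum : rsSum g (fun y => c * h y) n x = c * rsSum g h n x := by
    simp only [rsSum, Finset.mul_sum, mul_assoc]
  rw [hsum, ← mul_sub, abs_mul]
  calc |c| * |I - rsSum g h n x| ≤ (|c| + 1) * |I - rsSum g h n x| := by gcongr; linarith
    _ < (|c| + 1) * (ε / (|c| + 1)) := by gcongr; exact H n x hx hmesh
    _ = ε := by field_simp

theorem RSIntegralEq.sum {ι : Type*} (s : Finset ι) {f : ι → ℝ → ℝ} {J : ι → ℝ}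
    (hJ : ∀ i ∈ s, RSIntegralEq (f i) g (J i)) :
    RSIntegralEq (fun y => ∑ i ∈ s, f i y) g (∑ i ∈ s, J i) := by
  classical
  induction s using Finset.induction_on with
  | empty => exact fun ε hε => ⟨1, one_pos, fun n x _ _ => by simpa [rsSum] using hε⟩
  | insert i s hi ih =>
    simp only [Finset.sum_insert hi]
    exact (hJ i (Finset.mem_insert_self i s)).add
      (ih fun j hj => hJ j (Finset.mem_insert_of_mem hj))

theorem rsIntegralEq_const (c : ℝ) : RSIntegralEq (fun _ => c) g (c * (g 1 - g 0)) :=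
  fun ε hε => ⟨1, one_pos, fun n x hx _ => by
    rwa [rsSum, ← Finset.mul_sum, hx.sum_sub g, sub_self, abs_zero]⟩

theorem RSIntegralEq.abs_le_variationOnFromTo (hg : BoundedVariationOn g (Icc 0 1))
    (hh : ∀ y ∈ Icc (0 : ℝ) 1, |h y| ≤ 1) (hI : RSIntegralEq h g I) :
    |I| ≤ variationOnFromTo g (Icc 0 1) 0 1 := by
  refine le_of_forall_pos_lt_add fun ε hε => ?_
  obtain ⟨δ, hδ, H⟩ := hI ε hε
  obtain ⟨n, x, hx, hmesh⟩ := exists_isPartition_mesh_lt hδ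
  have hS : |rsSum g h n x| ≤ variationOnFromTo g (Icc 0 1) 0 1 := by
    refine (Finset.abs_sum_le_sum_abs _ _).trans <| le_trans
      (Finset.sum_le_sum fun i hi => ?_) (hx.sum_abs_sub_le_variationOnFromTo hg)
    rw [abs_mul]
    exact mul_le_of_le_one_left (abs_nonneg _) (hh _ (hx.mem_Icc_s7 (Finset.mem_range.1 hi)))
  linarith [abs_sub_abs_le_abs_sub I (rsSum g h n x), H n x hx hmesh]

end RSIntegral

section IntegrationByParts

theorem LocallyBoundedVariationOn.intervalIntegrable {f : ℝ → ℝ} {a b : ℝ}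
    (hf : LocallyBoundedVariationOn f (uIcc a b)) : IntervalIntegrable f volume a b := by
  obtain ⟨p, q, hp, hq, rfl⟩ := hf.exists_monotoneOn_sub_monotoneOn
  exact hp.intervalIntegrable.sub hq.intervalIntegrable

theorem IntervalIntegrable.mul_of_abs_le {f φ : ℝ → ℝ} {a b L : ℝ}
    (hf : IntervalIntegrable f volume a b) (hφ : IntervalIntegrable φ volume a b)
    (hφL : ∀ u ∈ uIoc a b, |φ u| ≤ L) : IntervalIntegrable (fun u => f u * φ u) volume a b := by
  rw [intervalIntegrable_iff] at *
  exact hf.mul_bdd hφ.aestronglyMeasurable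
    ((ae_restrict_mem measurableSet_uIoc).mono fun u hu => hφL u hu)

theorem rsSum_eq_sub_sum (g h : ℝ → ℝ) (n : ℕ) (x : ℕ → ℝ) :
    rsSum g h n x = h (x n) * g (x n) - h (x 0) * g (x 0)
      - ∑ i ∈ Finset.range n, g (x i) * (h (x (i + 1)) - h (x i)) := by
  rw [← Finset.sum_range_sub (fun i => h (x i) * g (x i)), rsSum, ← Finset.sum_sub_distrib]
  exact Finset.sum_congr rfl fun i _ => by ring

variable {g h φ : ℝ → ℝ} {L : ℝ}

theorem abs_mul_integral_sub_integral_le (hg : BoundedVariationOn g (Icc 0 1))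
    (hφL : ∀ u ∈ Icc (0 : ℝ) 1, |φ u| ≤ L) {a b : ℝ} (ha : 0 ≤ a) (hab : a ≤ b) (hb : b ≤ 1)
    (hφ : IntervalIntegrable φ volume a b)
    (hgφ : IntervalIntegrable (fun u => g u * φ u) volume a b) :
    |g a * (∫ u in a..b, φ u) - ∫ u in a..b, g u * φ u| ≤
      (variationOnFromTo g (Icc 0 1) 0 b - variationOnFromTo g (Icc 0 1) 0 a) * L * (b - a) := by
  have h0 : (0 : ℝ) ∈ Icc (0 : ℝ) 1 := ⟨le_rfl, zero_le_one⟩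
  have hΦ := variationOnFromTo.monotoneOn hg.locallyBoundedVariationOn h0
  rw [← intervalIntegral.integral_const_mul (g a) φ,
    ← intervalIntegral.integral_sub (hφ.const_mul _) hgφ, ← abs_of_nonneg (sub_nonneg.2 hab)]
  simp_rw [← sub_mul]
  refine (Real.norm_eq_abs _).symm.trans_le
    (intervalIntegral.norm_integral_le_of_norm_le_const fun u hu => ?_)
  rw [uIoc_of_le hab] at hu
  have hu₀₁ : u ∈ Icc (0 : ℝ) 1 := ⟨ha.trans hu.1.le, hu.2.trans hb⟩
  rw [Real.norm_eq_abs, abs_mul, abs_sub_comm]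
  refine mul_le_mul ?_ (hφL u hu₀₁) (abs_nonneg _)
    (sub_nonneg.2 (hΦ ⟨ha, hab.trans hb⟩ ⟨ha.trans hab, hb⟩ hab))
  exact (variationOnFromTo.abs_sub_le_sub_of_le hg.locallyBoundedVariationOn h0
    ⟨ha, hab.trans hb⟩ hu₀₁ hu.1.le).trans
    (sub_le_sub_right (hΦ hu₀₁ ⟨ha.trans hab, hb⟩ hu.2) _)

theorem sub_rsSum_eq_sum (hφ : IntervalIntegrable φ volume 0 1)
    (hgφ : IntervalIntegrable (fun u => g u * φ u) volume 0 1)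
    (hh : ∀ y ∈ Icc (0 : ℝ) 1, h y = h 0 + ∫ u in 0..y, φ u) {n : ℕ} {x : ℕ → ℝ}
    (hx : IsPartition n x) :
    h 1 * g 1 - h 0 * g 0 - (∫ u in 0..1, g u * φ u) - rsSum g h n x =
      ∑ i ∈ Finset.range n,
        (g (x i) * (∫ u in x i..x (i + 1), φ u) - ∫ u in x i..x (i + 1), g u * φ u) := by
  have hΔh : ∀ i < n, h (x (i + 1)) - h (x i) = ∫ u in x i..x (i + 1), φ u := fun i hi => by
    rw [hh _ (hx.mem_Icc_s7 hi), hh _ (hx.mem_Icc_s7 hi.le), add_sub_add_left_eq_sub, ← hx.1,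
      intervalIntegral.integral_interval_sub_left (hx.intervalIntegrable hφ (Nat.zero_le n) hi)
        (hx.intervalIntegrable hφ (Nat.zero_le n) hi.le)]
  have hsplit : ∫ u in 0..1, g u * φ u =
      ∑ i ∈ Finset.range n, ∫ u in x i..x (i + 1), g u * φ u := by
    rw [intervalIntegral.sum_integral_adjacent_intervals fun i hi =>
      hx.intervalIntegrable hgφ hi.le hi, hx.1, hx.2.1]
  rw [rsSum_eq_sub_sum, hx.1, hx.2.1, hsplit, Finset.sum_sub_distrib,
    Finset.sum_congr rfl fun i hi => congrArg (g (x i) * ·) (hΔh i (Finset.mem_range.1 hi))]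
  ring

theorem abs_sub_rsSum_le (hg : BoundedVariationOn g (Icc 0 1))
    (hφ : IntervalIntegrable φ volume 0 1) (hφL : ∀ u ∈ Icc (0 : ℝ) 1, |φ u| ≤ L)
    (hh : ∀ y ∈ Icc (0 : ℝ) 1, h y = h 0 + ∫ u in 0..y, φ u)
    {n : ℕ} {x : ℕ → ℝ} (hx : IsPartition n x) {δ : ℝ} (hmesh : ∀ i < n, x (i + 1) - x i ≤ δ) :
    |h 1 * g 1 - h 0 * g 0 - (∫ u in 0..1, g u * φ u) - rsSum g h n x| ≤
      L * δ * variationOnFromTo g (Icc 0 1) 0 1 := by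
  set Φ := variationOnFromTo g (Icc 0 1) 0
  have hL : 0 ≤ L := (abs_nonneg _).trans (hφL 0 ⟨le_rfl, zero_le_one⟩)
  have hgφ : IntervalIntegrable (fun u => g u * φ u) volume 0 1 :=
    LocallyBoundedVariationOn.intervalIntegrable
      (by rw [uIcc_of_le zero_le_one]; exact hg.locallyBoundedVariationOn)
      |>.mul_of_abs_le hφ fun u hu => hφL u (uIoc_subset_uIcc.trans (by simp) hu)
  rw [sub_rsSum_eq_sum hφ hgφ hh hx]
  calc _ ≤ ∑ i ∈ Finset.range n, (Φ (x (i + 1)) - Φ (x i)) * L * δ := by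
        refine (Finset.abs_sum_le_sum_abs _ _).trans (Finset.sum_le_sum fun i hi => ?_)
        have hi : i < n := Finset.mem_range.1 hi
        refine (abs_mul_integral_sub_integral_le hg hφL (hx.mem_Icc_s7 hi.le).1 (hx.2.2 i hi).le
          (hx.mem_Icc_s7 hi).2 (hx.intervalIntegrable hφ hi.le hi)
          (hx.intervalIntegrable hgφ hi.le hi)).trans ?_
        have hΦi : 0 ≤ Φ (x (i + 1)) - Φ (x i) :=
          sub_nonneg.2 (variationOnFromTo.monotoneOn hg.locallyBoundedVariationOn
            ⟨le_rfl, zero_le_one⟩ (hx.mem_Icc_s7 hi.le) (hx.mem_Icc_s7 hi) (hx.2.2 i hi).le)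
        exact mul_le_mul_of_nonneg_left (hmesh i hi) (mul_nonneg hΦi hL)
    _ = L * δ * Φ 1 := by
        rw [← Finset.sum_mul, ← Finset.sum_mul, hx.sum_sub Φ,
          show Φ 0 = 0 from variationOnFromTo.self _ _ _, sub_zero]
        ring

theorem rsIntegralEq_of_eq_primitive (hg : BoundedVariationOn g (Icc 0 1))
    (hφ : IntervalIntegrable φ volume 0 1) (hφL : ∀ u ∈ Icc (0 : ℝ) 1, |φ u| ≤ L)
    (hh : ∀ y ∈ Icc (0 : ℝ) 1, h y = h 0 + ∫ u in 0..y, φ u) :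
    RSIntegralEq h g (h 1 * g 1 - h 0 * g 0 - ∫ u in 0..1, g u * φ u) := by
  intro ε hε
  set V := variationOnFromTo g (Icc 0 1) 0 1
  have hV : 0 ≤ V := variationOnFromTo.nonneg_of_le _ _ zero_le_one
  have hL : 0 ≤ L := (abs_nonneg _).trans (hφL 0 ⟨le_rfl, zero_le_one⟩)
  refine ⟨ε / ((L + 1) * (V + 1)), by positivity, fun n x hx hmesh => ?_⟩
  refine (abs_sub_rsSum_le hg hφ hφL hh hx fun i hi => (hmesh i hi).le).trans_lt ?_
  rw [show L * (ε / ((L + 1) * (V + 1))) * V = ε * (L * V / ((L + 1) * (V + 1))) by ring]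
  exact mul_lt_of_lt_one_right hε ((div_lt_one (by positivity)).2 (by nlinarith))

end IntegrationByParts

section Ramp

/-- The continuous function that is `0` left of `a - η`, `1` right of `a`, and affine between. -/
noncomputable def ramp (a η y : ℝ) : ℝ := (min a y - min (a - η) y) / η

variable {a η y : ℝ}

theorem continuous_ramp (a η : ℝ) : Continuous (ramp a η) := by
  unfold ramp; fun_prop

theorem ramp_nonneg (hη : 0 < η) : 0 ≤ ramp a η y :=
  div_nonneg (sub_nonneg.2 (min_le_min_right _ (by linarith))) hη.le

theorem ramp_le_one (hη : 0 < η) : ramp a η y ≤ 1 := by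
  rw [ramp, div_le_one hη]
  simp only [min_def]
  split_ifs <;> linarith

theorem antitone_ramp (hη : 0 < η) : Antitone fun a => ramp a η y := fun a b hab => by
  simp only [ramp]
  gcongr ?_ / η
  simp only [min_def]
  split_ifs <;> linarith

theorem ramp_of_le (hη : 0 < η) (h : a ≤ y) : ramp a η y = 1 := by
  rw [ramp, min_eq_left h, min_eq_left (by linarith), sub_sub_cancel, div_self hη.ne']

theorem ramp_of_le_sub (hη : 0 ≤ η) (h : y ≤ a - η) : ramp a η y = 0 := by
  rw [ramp, min_eq_right (h.trans (by linarith)), min_eq_right h, sub_self, zero_div]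

theorem integral_indicator_eq_ramp (hη : 0 < η) (ha : η ≤ a) (hy : 0 ≤ y) :
    ∫ u in 0..y, (Ioc (a - η) a).indicator (fun _ => η⁻¹) u = ramp a η y := by
  rw [intervalIntegral.integral_of_le hy, setIntegral_indicator measurableSet_Ioc, Ioc_inter_Ioc,
    setIntegral_const, Real.volume_real_Ioc, smul_eq_mul, max_eq_right (sub_nonneg.2 ha), ramp,
    div_eq_mul_inv]
  congr 1
  simp only [min_def, max_def]
  split_ifs <;> linarith

theorem rsIntegralEq_ramp {g : ℝ → ℝ} (hg : BoundedVariationOn g (Icc 0 1))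
    (hη : 0 < η) (ha : η ≤ a) (ha₁ : a ≤ 1) :
    RSIntegralEq (ramp a η) g (g 1 - η⁻¹ * ∫ u in (a - η)..a, g u) := by
  set φ := (Ioc (a - η) a).indicator fun _ : ℝ => η⁻¹
  have hφ : IntervalIntegrable φ volume 0 1 := by
    rw [intervalIntegrable_iff]
    exact IntegrableOn.indicator (integrableOn_const (by simp))
      measurableSet_Ioc
  have hφL : ∀ u ∈ Icc (0 : ℝ) 1, |φ u| ≤ η⁻¹ := fun u _ => by
    by_cases hu : u ∈ Ioc (a - η) a <;> simp [φ, hu, abs_of_pos hη, hη.le]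
  have hramp₀ : ramp a η 0 = 0 := ramp_of_le_sub hη.le (by linarith)
  convert rsIntegralEq_of_eq_primitive (h := ramp a η) hg hφ hφL fun y hy => by
    rw [hramp₀, zero_add, integral_indicator_eq_ramp hη ha hy.1] using 1
  rw [ramp_of_le hη ha₁, hramp₀, one_mul, zero_mul, sub_zero]
  have hgφ : ∀ u, g u * φ u = η⁻¹ * (Ioc (a - η) a).indicator g u := fun u => by
    by_cases hu : u ∈ Ioc (a - η) a <;> simp [φ, hu, mul_comm]
  simp_rw [hgφ]
  rw [intervalIntegral.integral_const_mul, intervalIntegral.integral_of_le zero_le_one,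
    setIntegral_indicator measurableSet_Ioc,
    inter_eq_self_of_subset_right (Ioc_subset_Ioc (by linarith) ha₁),
    intervalIntegral.integral_of_le (by linarith)]

end Ramp

theorem tendsto_inv_mul_integral_sub_left {g : ℝ → ℝ} {a : ℝ} (ha : 0 < a)
    (hg : IntervalIntegrable g volume 0 a) (hcont : ContinuousWithinAt g (Iic a) a) :
    Tendsto (fun η => η⁻¹ * ∫ u in (a - η)..a, g u) (𝓝[>] 0) (𝓝 (g a)) := by
  have hderiv : HasDerivWithinAt (fun b => ∫ u in 0..b, g u) (g a) (Iic a) a :=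
    intervalIntegral.integral_hasDerivWithinAt_right hg
      (AEStronglyMeasurable.stronglyMeasurableAtFilter_of_mem hg.1.aestronglyMeasurable
        (Ioc_mem_nhdsLE ha)) hcont
  have hslope := hasDerivWithinAt_iff_tendsto_slope.1 hderiv
  rw [Iic_sdiff_right] at hslope
  have hleft : Tendsto (fun η => a - η) (𝓝[>] 0) (𝓝[<] a) :=
    tendsto_nhdsWithin_of_tendsto_nhds_of_eventually_within _
      (((continuous_sub_left a).tendsto' 0 a (sub_zero a)).mono_left nhdsWithin_le_nhds)
      (eventually_nhdsWithin_of_forall fun η hη => by simpa using hη)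
  refine (hslope.comp hleft).congr' ?_
  filter_upwards [Ioo_mem_nhdsGT ha] with η hη
  simp only [Function.comp_apply, slope, vsub_eq_sub, smul_eq_mul, sub_sub_cancel_left, inv_neg]
  rw [neg_mul, ← mul_neg, neg_sub, intervalIntegral.integral_interval_sub_left hg
    (hg.mono_set (uIcc_subset_uIcc_left (by rw [uIcc_of_le ha.le]; exact ⟨by linarith [hη.2],
      by linarith [hη.1]⟩)))]

theorem abs_add_sum_sub_mul_le_one {σ w : ℕ → ℝ} {m : ℕ} (hσ : ∀ k, |σ k| ≤ 1)
    (hw₀ : ∀ k, 0 ≤ w k) (hw₁ : w 0 ≤ 1) (hw : ∀ k, k + 1 < m → w (k + 1) ≤ w k) :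
    |σ 0 + ∑ k ∈ Finset.range m, (σ (k + 1) - σ k) * w k| ≤ 1 := by
  -- the partial sum is a convex combination of `σ 0, …, σ (j + 1)` with weight `w j` on `σ (j + 1)`
  have key : ∀ j < m, |σ 0 + ∑ k ∈ Finset.range (j + 1), (σ (k + 1) - σ k) * w k
      - σ (j + 1) * w j| ≤ 1 - w j := by
    intro j hj
    induction j with
    | zero =>
      rw [show σ 0 + ∑ k ∈ Finset.range 1, (σ (k + 1) - σ k) * w k - σ 1 * w 0
        = σ 0 * (1 - w 0) by simp; ring, abs_mul, abs_of_nonneg (sub_nonneg.2 (hw₁))]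
      exact mul_le_of_le_one_left (sub_nonneg.2 (hw₁)) (hσ 0)
    | succ j ih =>
      have hj' := ih (by omega)
      rw [Finset.sum_range_succ]
      calc _ = |(σ 0 + ∑ k ∈ Finset.range (j + 1), (σ (k + 1) - σ k) * w k - σ (j + 1) * w j)
            + σ (j + 1) * (w j - w (j + 1))| := by ring_nf
        _ ≤ (1 - w j) + (w j - w (j + 1)) := by
          refine (abs_add_le _ _).trans (add_le_add hj' ?_)
          rw [abs_mul, abs_of_nonneg (sub_nonneg.2 (hw j hj))]
          exact mul_le_of_le_one_left (sub_nonneg.2 (hw j hj)) (hσ _)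
        _ = 1 - w (j + 1) := by ring
  rcases m with _ | j
  · simpa using hσ 0
  · have hσw : |σ (j + 1) * w j| ≤ w j := by
      rw [abs_mul, abs_of_nonneg (hw₀ j)]; exact mul_le_of_le_one_left (hw₀ j) (hσ _)
    linarith [key j (Nat.lt_succ_self j), abs_sub_abs_le_abs_sub
      (σ 0 + ∑ k ∈ Finset.range (j + 1), (σ (k + 1) - σ k) * w k) (σ (j + 1) * w j)]

theorem sum_mul_sub_eq (σ d : ℕ → ℝ) (m : ℕ) :
    ∑ k ∈ Finset.range (m + 1), σ k * (d k - d (k + 1)) =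
      σ 0 * d 0 + ∑ k ∈ Finset.range m, (σ (k + 1) - σ k) * d (k + 1) - σ m * d (m + 1) := by
  induction m with
  | zero => simp; ring
  | succ m ih => rw [Finset.sum_range_succ, ih, Finset.sum_range_succ]; ring

section RampStep

/-- For a partition `t` and small `η`, this is `σ k` on `[t k, t (k + 1) - η]` and affine on
`[t (k + 1) - η, t (k + 1)]`. -/
noncomputable def rampStep (σ t : ℕ → ℝ) (m : ℕ) (η y : ℝ) : ℝ :=
  σ 0 + ∑ k ∈ Finset.range m, (σ (k + 1) - σ k) * ramp (t (k + 1)) η y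

variable {g : ℝ → ℝ} {σ t : ℕ → ℝ} {m : ℕ} {η : ℝ}

theorem continuous_rampStep (σ t : ℕ → ℝ) (m : ℕ) (η : ℝ) : Continuous (rampStep σ t m η) :=
  continuous_const.add <|
    continuous_finsetSum _ fun _ _ => continuous_const.mul (continuous_ramp _ _)

theorem abs_rampStep_le_one (hσ : ∀ k, |σ k| ≤ 1) (ht : MonotoneOn t (Iic m)) (hη : 0 < η)
    (y : ℝ) : |rampStep σ t m η y| ≤ 1 :=
  abs_add_sum_sub_mul_le_one hσ (fun _ => ramp_nonneg hη) (ramp_le_one hη) fun k hk =>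
    antitone_ramp hη (ht (by simp; omega) (by simp; omega) (by omega))

theorem rsIntegralEq_rampStep (hg : BoundedVariationOn g (Icc 0 1))
    (ht : IsPartition (m + 1) t) (hη : 0 < η) (hηt : η ≤ t 1) :
    RSIntegralEq (rampStep σ t m η) g (σ 0 * (g 1 - g 0) + ∑ k ∈ Finset.range m,
      (σ (k + 1) - σ k) * (g 1 - η⁻¹ * ∫ u in (t (k + 1) - η)..t (k + 1), g u)) :=
  (rsIntegralEq_const (σ 0)).add <| RSIntegralEq.sum _ fun k hk => by
    have hk : k < m := Finset.mem_range.1 hk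
    exact (rsIntegralEq_ramp hg hη (hηt.trans (ht.monotoneOn (by simp) (by simp; omega)
      (by omega))) (ht.mem_Icc_s7 (by omega)).2).const_mul _

theorem tendsto_rsIntegral_rampStep (hg : BoundedVariationOn g (Icc 0 1))
    (hlc : ∀ x ∈ Ioo (0 : ℝ) 1, ContinuousWithinAt g (Iic x) x) (ht : IsPartition (m + 1) t) :
    Tendsto (fun η => σ 0 * (g 1 - g 0) + ∑ k ∈ Finset.range m,
        (σ (k + 1) - σ k) * (g 1 - η⁻¹ * ∫ u in (t (k + 1) - η)..t (k + 1), g u)) (𝓝[>] 0)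
      (𝓝 (σ 0 * (g 1 - g 0) +
        ∑ k ∈ Finset.range m, (σ (k + 1) - σ k) * (g 1 - g (t (k + 1))))) := by
  refine tendsto_const_nhds.add <| tendsto_finsetSum _ fun k hk =>
    tendsto_const_nhds.mul <| tendsto_const_nhds.sub ?_
  have hk := ht.mem_Ioo (Nat.succ_pos k) (by simpa using hk)
  refine tendsto_inv_mul_integral_sub_left hk.1
    (LocallyBoundedVariationOn.intervalIntegrable ?_) (hlc _ hk)
  rw [uIcc_of_le hk.1.le]
  exact (hg.mono (Icc_subset_Icc_right hk.2.le)).locallyBoundedVariationOn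

theorem exists_rsIntegralEq_sum_abs_sub_lt (hg : BoundedVariationOn g (Icc 0 1))
    (hlc : ∀ x ∈ Ioo (0 : ℝ) 1, ContinuousWithinAt g (Iic x) x)
    {M : ℕ} (ht : IsPartition M t) {ε : ℝ} (hε : 0 < ε) :
    ∃ h I, Continuous h ∧ (∀ y, |h y| ≤ 1) ∧ RSIntegralEq h g I ∧
      ∑ k ∈ Finset.range M, |g (t (k + 1)) - g (t k)| - ε < I := by
  obtain ⟨m, rfl⟩ : ∃ m, M = m + 1 := Nat.exists_eq_succ_of_ne_zero fun hM => by
    simpa [hM, ht.1] using ht.2.1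
  set σ : ℕ → ℝ := fun k => SignType.sign (g (t (k + 1)) - g (t k))
  have hσ : ∀ k, |σ k| ≤ 1 := fun k => by
    rcases lt_trichotomy (g (t (k + 1)) - g (t k)) 0 with h | h | h <;> simp [σ, h]
  have hsum : ∑ k ∈ Finset.range (m + 1), |g (t (k + 1)) - g (t k)| = σ 0 * (g 1 - g 0)
      + ∑ k ∈ Finset.range m, (σ (k + 1) - σ k) * (g 1 - g (t (k + 1))) := by
    calc _ = ∑ k ∈ Finset.range (m + 1), σ k * ((g 1 - g (t k)) - (g 1 - g (t (k + 1)))) := by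
          simp [σ, sub_sub_sub_cancel_left, sign_mul_self]
      _ = _ := by rw [sum_mul_sub_eq]; simp [ht.1, ht.2.1]
  rw [hsum]
  obtain ⟨η, hlt, hη⟩ := (((tendsto_rsIntegral_rampStep (σ := σ) hg hlc ht).eventually
    (lt_mem_nhds (sub_lt_self _ hε))).and
    (Ioc_mem_nhdsGT (ht.1 ▸ ht.2.2 0 (Nat.succ_pos m)))).exists
  exact ⟨_, _, continuous_rampStep σ t m η,
    abs_rampStep_le_one hσ (ht.monotoneOn.mono (Iic_subset_Iic.2 m.le_succ)) hη.1,
    rsIntegralEq_rampStep hg ht hη.1 hη.2, hlt⟩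

end RampStep

theorem op_norm_eq_variation_general (g : ℝ → ℝ)
    (hbv : BoundedVariationOn g (Set.Icc 0 1))
    (hlc : ∀ x ∈ Set.Ioo (0:ℝ) 1,
      Filter.Tendsto g (nhdsWithin x (Set.Ioo 0 x)) (nhds (g x))) :
    sSup {y : ℝ | ∃ (h : ℝ → ℝ) (I : ℝ), ContinuousOn h (Set.Icc 0 1) ∧
        (∀ x ∈ Set.Icc (0:ℝ) 1, |h x| ≤ 1) ∧ RSIntegralEq h g I ∧ y = |I|}
      = variationOnFromTo g (Set.Icc 0 1) 0 1 := by
  set S := {y : ℝ | ∃ (h : ℝ → ℝ) (I : ℝ), ContinuousOn h (Set.Icc 0 1) ∧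
    (∀ x ∈ Set.Icc (0:ℝ) 1, |h x| ≤ 1) ∧ RSIntegralEq h g I ∧ y = |I|}
  have hS : ∀ y ∈ S, y ≤ variationOnFromTo g (Icc 0 1) 0 1 := by
    rintro _ ⟨h, I, -, hh, hI, rfl⟩
    exact hI.abs_le_variationOnFromTo hbv hh
  have hS₀ : (0 : ℝ) ∈ S :=
    ⟨fun _ => 0, 0, continuousOn_const, by simp, by simpa using rsIntegralEq_const (g := g) 0,
      abs_zero.symm⟩
  have hlc' : ∀ x ∈ Ioo (0 : ℝ) 1, ContinuousWithinAt g (Iic x) x := fun x hx =>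
    continuousWithinAt_Iio_iff_Iic.1 <| by
      rw [ContinuousWithinAt, ← nhdsWithin_Ioo_eq_nhdsLT hx.1]; exact hlc x hx
  refine le_antisymm (csSup_le ⟨0, hS₀⟩ hS)
    (variationOnFromTo_le_of_forall_isPartition fun M t ht => ?_)
  refine le_of_forall_pos_lt_add fun ε hε => ?_
  obtain ⟨h, I, hcont, hh, hI, hlt⟩ := exists_rsIntegralEq_sum_abs_sub_lt hbv hlc' ht hε
  have hI_le := le_csSup ⟨_, hS⟩ ⟨h, I, hcont.continuousOn, fun y _ => hh y, hI, rfl⟩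
  linarith [le_abs_self I]

/-- For a normalized function g of bounded variation, the operator
norm of F_g : h ↦ ∫ h dg, i.e. the supremum of |∫ h dg| over continuous h with
‖h‖ ≤ 1, equals Var(g). -/
theorem op_norm_eq_variation (g : ℝ → ℝ)
    (hbv : BoundedVariationOn g (Set.Icc 0 1))
    (h0 : g 0 = 0)
    (hlc : ∀ x ∈ Set.Ioo (0:ℝ) 1,
      Filter.Tendsto g (nhdsWithin x (Set.Ioo 0 x)) (nhds (g x))) :
    sSup {y : ℝ | ∃ (h : ℝ → ℝ) (I : ℝ), ContinuousOn h (Set.Icc 0 1) ∧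
        (∀ x ∈ Set.Icc (0:ℝ) 1, |h x| ≤ 1) ∧ RSIntegralEq h g I ∧ y = |I|}
      = variationOnFromTo g (Set.Icc 0 1) 0 1 :=
  op_norm_eq_variation_general g hbv hlc
end

section
/- Let F : C[0,1] → ℝ be continuous linear and let F⁺, F⁻ be non-negative continuous linear functionals with F = F⁺ - F⁻. Then (F⁺, F⁻) is the minimal (Jordan) decomposition of F if and only if ‖F‖ = ‖F⁺‖ + ‖F⁻‖. -/
/-!
Work on `C(K, ℝ)` with `K` compact, where a non-negative functional `G` has `‖G‖ = G 1`.

If `Fp - Fm = G₁ - G₂` with all four functionals non-negative, then `G₁ - Fp = G₂ - Fm`, and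
for `h ≥ 0` and `‖u‖ ≤ 1` the splitting `2 h = h (1 - u) + h (1 + u)` charges the first part
to `G₁ - Fp ≥ -Fp` and the second to `G₂ - Fm ≥ -Fm`:
`2 (G₁ - Fp) h ≥ -‖h‖ (Fp 1 + Fm 1 - (Fp - Fm) u)`. Taking the supremum over `u` shows
`G₁ ≥ Fp` as soon as `‖Fp - Fm‖ = Fp 1 + Fm 1`.

Conversely, Hahn–Banach extends `(h, -h) ↦ F h` from the antidiagonal of `C(K, ℝ) × C(K, ℝ)`
below the sublinear functional `p ↦ ‖F‖ * max ‖p.1⁺‖ ‖p.2⁺‖`, which vanishes on non-positive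
pairs. The two restrictions of the extension give a non-negative decomposition `F = G₁ - G₂`
with `G₁ 1 + G₂ 1 ≤ ‖F‖`, and a minimal decomposition lies below it.
-/

/-- A continuous linear functional on C[0,1] is non-negative if it is
non-negative on non-negative functions. -/
def NonnegFunctional (F : C(Set.Icc (0:ℝ) 1, ℝ) →L[ℝ] ℝ) : Prop :=
  ∀ h : C(Set.Icc (0:ℝ) 1, ℝ), (∀ x, 0 ≤ h x) → 0 ≤ F h

variable {K : Type*} [TopologicalSpace K]

namespace ContinuousMap

lemma posPart_add_le (a b : C(K, ℝ)) : (a + b)⁺ ≤ a⁺ + b⁺ := le_def.2 fun x => by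
  simp only [posPart_def, sup_apply, add_apply, zero_apply]
  exact max_le (add_le_add (le_max_left _ _) (le_max_left _ _))
    (add_nonneg (le_max_right _ _) (le_max_right _ _))

lemma posPart_smul {c : ℝ} (hc : 0 ≤ c) (h : C(K, ℝ)) : (c • h)⁺ = c • h⁺ := by
  ext x
  simp [posPart_def, mul_max_of_nonneg _ _ hc]

variable [CompactSpace K]

lemma norm_one_le : ‖(1 : C(K, ℝ))‖ ≤ 1 :=
  (norm_le _ zero_le_one).2 fun x => by simp

lemma norm_le_norm_of_nonneg_of_le {f g : C(K, ℝ)} (hf : 0 ≤ f) (hfg : f ≤ g) : ‖f‖ ≤ ‖g‖ :=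
  (norm_le _ (norm_nonneg g)).2 fun x => by
    rw [Real.norm_of_nonneg (le_def.1 hf x)]
    exact (le_def.1 hfg x).trans (g.apply_le_norm x)

lemma norm_posPart_add_le (a b : C(K, ℝ)) : ‖(a + b)⁺‖ ≤ ‖a⁺‖ + ‖b⁺‖ :=
  (norm_le_norm_of_nonneg_of_le (posPart_nonneg _) (posPart_add_le a b)).trans (norm_add_le _ _)

lemma norm_le_max_norm_posPart_norm_negPart (h : C(K, ℝ)) : ‖h‖ ≤ max ‖h⁺‖ ‖h⁻‖ :=
  (norm_le _ (by positivity)).2 fun x => by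
    rw [Real.norm_eq_abs, abs_le, neg_le]
    constructor
    · calc -h x ≤ h⁻ x := by simp [negPart_def]
        _ ≤ ‖h⁻‖ := apply_le_norm _ x
        _ ≤ _ := le_max_right _ _
    · calc h x ≤ h⁺ x := by simp [posPart_def]
        _ ≤ ‖h⁺‖ := apply_le_norm _ x
        _ ≤ _ := le_max_left _ _

end ContinuousMap

section Positive

variable {𝓕 : Type*} [FunLike 𝓕 C(K, ℝ) ℝ] [LinearMapClass 𝓕 ℝ C(K, ℝ) ℝ] {G : 𝓕}

lemma apply_mono_of_nonneg (hG : ∀ h, 0 ≤ h → 0 ≤ G h) {a b : C(K, ℝ)} (hab : a ≤ b) :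
    G a ≤ G b := by
  simpa [map_sub] using hG (b - a) (sub_nonneg.2 hab)

variable [CompactSpace K]

lemma apply_mul_le_norm_mul (hG : ∀ h, 0 ≤ h → 0 ≤ G h) (h : C(K, ℝ)) {k : C(K, ℝ)}
    (hk : 0 ≤ k) : G (h * k) ≤ ‖h‖ * G k := by
  have hle : h * k ≤ ‖h‖ • k := ContinuousMap.le_def.2 fun x => by
    simpa using mul_le_mul_of_nonneg_right (h.apply_le_norm x) (ContinuousMap.le_def.1 hk x)
  simpa [map_smul] using apply_mono_of_nonneg hG hle

lemma abs_apply_le_of_nonneg (hG : ∀ h, 0 ≤ h → 0 ≤ G h) (h : C(K, ℝ)) :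
    |G h| ≤ ‖h‖ * G 1 := by
  have h₁ := apply_mul_le_norm_mul hG h zero_le_one
  have h₂ := apply_mul_le_norm_mul hG (-h) zero_le_one
  rw [mul_one] at h₁ h₂
  rw [map_neg, norm_neg] at h₂
  exact abs_le.2 ⟨by linarith, h₁⟩

end Positive

lemma ContinuousLinearMap.norm_eq_apply_one_of_nonneg [CompactSpace K]
    {G : C(K, ℝ) →L[ℝ] ℝ} (hG : ∀ h, 0 ≤ h → 0 ≤ G h) : ‖G‖ = G 1 := by
  refine le_antisymm (G.opNorm_le_bound (hG 1 zero_le_one) fun h => ?_) ?_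
  · rw [Real.norm_eq_abs, mul_comm]
    exact abs_apply_le_of_nonneg hG h
  · calc G 1 ≤ ‖G 1‖ := Real.le_norm_self _
      _ ≤ ‖G‖ * ‖(1 : C(K, ℝ))‖ := G.le_opNorm 1
      _ ≤ ‖G‖ := mul_le_of_le_one_right (norm_nonneg G) ContinuousMap.norm_one_le

lemma ContinuousLinearMap.norm_le_of_forall_apply_le {E : Type*} [SeminormedAddCommGroup E]
    [NormedSpace ℝ E] {f : E →L[ℝ] ℝ} {C : ℝ} (hf : ∀ x, ‖x‖ ≤ 1 → f x ≤ C) : ‖f‖ ≤ C := by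
  have hC : 0 ≤ C := by simpa using hf 0 (by simp)
  refine f.opNorm_le_of_unit_norm hC fun x hx => abs_le.2 ⟨?_, hf x hx.le⟩
  exact neg_le.2 (by simpa using hf (-x) (by simp [hx]))

section Decomposition

variable [CompactSpace K]

lemma ContinuousLinearMap.exists_nonneg_extension_prod (F : C(K, ℝ) →L[ℝ] ℝ) :
    ∃ Φ : C(K, ℝ) × C(K, ℝ) →ₗ[ℝ] ℝ, (∀ p, 0 ≤ p → 0 ≤ Φ p) ∧
      (∀ h, Φ (h, -h) = F h) ∧ Φ (1, 1) ≤ ‖F‖ := by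
  let N : C(K, ℝ) × C(K, ℝ) → ℝ := fun p => ‖F‖ * max ‖p.1⁺‖ ‖p.2⁺‖
  have N_hom : ∀ c : ℝ, 0 < c → ∀ p, N (c • p) = c * N p := fun c hc p => by
    simp only [N, Prod.smul_fst, Prod.smul_snd, ContinuousMap.posPart_smul hc.le, norm_smul,
      Real.norm_of_nonneg hc.le]
    rw [← mul_max_of_nonneg _ _ hc.le]
    ring
  have N_add : ∀ p q, N (p + q) ≤ N p + N q := fun p q => by
    simp only [N, ← mul_add, Prod.fst_add, Prod.snd_add]
    refine mul_le_mul_of_nonneg_left (max_le ?_ ?_) (norm_nonneg F)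
    · exact (ContinuousMap.norm_posPart_add_le _ _).trans
        (add_le_add (le_max_left _ _) (le_max_left _ _))
    · exact (ContinuousMap.norm_posPart_add_le _ _).trans
        (add_le_add (le_max_right _ _) (le_max_right _ _))
  let f := ((F : C(K, ℝ) →ₗ[ℝ] ℝ) ∘ₗ LinearMap.fst ℝ C(K, ℝ) C(K, ℝ)).toPMap
    (LinearMap.ker (LinearMap.fst ℝ C(K, ℝ) C(K, ℝ) + LinearMap.snd ℝ C(K, ℝ) C(K, ℝ)))
  obtain ⟨Φ, hΦf, hΦN⟩ := exists_extension_of_le_sublinear f N N_hom N_add fun ⟨p, hp⟩ => by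
    have hp2 : p.2 = -p.1 := eq_neg_of_add_eq_zero_right hp
    calc f ⟨p, hp⟩ = F p.1 := rfl
      _ ≤ ‖F‖ * ‖p.1‖ := (Real.le_norm_self _).trans (F.le_opNorm _)
      _ ≤ ‖F‖ * max ‖p.1⁺‖ ‖p.2⁺‖ := by
        rw [hp2, posPart_neg]
        exact mul_le_mul_of_nonneg_left (ContinuousMap.norm_le_max_norm_posPart_norm_negPart _)
          (norm_nonneg F)
  refine ⟨Φ, fun p hp => ?_, fun h => hΦf ⟨(h, -h), add_neg_cancel h⟩, ?_⟩
  · have : N (-p) = 0 := by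
      simp [N, posPart_eq_zero.2 (neg_nonpos.2 hp.1), posPart_eq_zero.2 (neg_nonpos.2 hp.2)]
    simpa [this] using hΦN (-p)
  · calc Φ (1, 1) ≤ N (1, 1) := hΦN _
      _ ≤ ‖F‖ := by
        simpa [N, posPart_eq_self.2 zero_le_one] using
          mul_le_of_le_one_right (norm_nonneg F) ContinuousMap.norm_one_le

lemma ContinuousLinearMap.exists_nonneg_sub_eq_and_apply_one_add_le_norm (F : C(K, ℝ) →L[ℝ] ℝ) :
    ∃ G₁ G₂ : C(K, ℝ) →L[ℝ] ℝ, (∀ h, 0 ≤ h → 0 ≤ G₁ h) ∧ (∀ h, 0 ≤ h → 0 ≤ G₂ h) ∧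
      F = G₁ - G₂ ∧ G₁ 1 + G₂ 1 ≤ ‖F‖ := by
  obtain ⟨Φ, hΦ, hΦF, hΦ1⟩ := F.exists_nonneg_extension_prod
  let Φ₁ := Φ ∘ₗ LinearMap.inl ℝ C(K, ℝ) C(K, ℝ)
  have hΦ₁ : ∀ h, 0 ≤ h → 0 ≤ Φ₁ h := fun h hh => hΦ _ ⟨hh, le_rfl⟩
  let G₁ := Φ₁.mkContinuous (Φ₁ 1) fun h => by
    rw [Real.norm_eq_abs, mul_comm]
    exact abs_apply_le_of_nonneg hΦ₁ h
  have hG₁F : ∀ h, (G₁ - F) h = Φ (0, h) := fun h => by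
    rw [sub_apply, ← hΦF h]
    simp [G₁, Φ₁, ← map_sub]
  refine ⟨G₁, G₁ - F, hΦ₁, fun h hh => ?_, (sub_sub_cancel G₁ F).symm, ?_⟩
  · rw [hG₁F]
    exact hΦ _ ⟨le_rfl, hh⟩
  · rw [hG₁F]
    simpa [G₁, Φ₁, ← map_add] using hΦ1

end Decomposition

section Minimality

variable [CompactSpace K] {Fp Fm G₁ G₂ : C(K, ℝ) →L[ℝ] ℝ}
  (hp : ∀ h, 0 ≤ h → 0 ≤ Fp h) (hm : ∀ h, 0 ≤ h → 0 ≤ Fm h)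
  (hG₁ : ∀ h, 0 ≤ h → 0 ≤ G₁ h) (hG₂ : ∀ h, 0 ≤ h → 0 ≤ G₂ h)

include hp hm hG₁ hG₂ in
lemma norm_mul_apply_le_of_sub_eq_sub (hdec : Fp - Fm = G₁ - G₂) {h u : C(K, ℝ)}
    (hh : 0 ≤ h) (hu : ‖u‖ ≤ 1) :
    ‖h‖ * (Fp - Fm) u ≤ ‖h‖ * (Fp 1 + Fm 1) + 2 * (G₁ h - Fp h) := by
  have hu' : ∀ x, |u x| ≤ 1 := fun x => (u.norm_coe_le_norm x).trans hu
  have hsub : 0 ≤ 1 - u := ContinuousMap.le_def.2 fun x => by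
    simpa using (abs_le.1 (hu' x)).2
  have hadd : 0 ≤ 1 + u := ContinuousMap.le_def.2 fun x => by
    simpa [neg_le_iff_add_nonneg'] using (abs_le.1 (hu' x)).1
  have hQ : G₂ - Fm = G₁ - Fp := by
    rw [← neg_sub, ← sub_eq_sub_iff_sub_eq_sub.1 hdec, neg_sub]
  have htwo : 2 * (G₁ h - Fp h) = (G₁ - Fp) (h * (1 - u)) + (G₂ - Fm) (h * (1 + u)) := by
    rw [hQ, ← map_add, show h * (1 - u) + h * (1 + u) = h + h by ring, map_add, sub_apply]
    ring
  have a₁ := apply_mul_le_norm_mul hp h hsub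
  have a₂ := apply_mul_le_norm_mul hm h hadd
  have b₁ := hG₁ _ (mul_nonneg hh hsub)
  have b₂ := hG₂ _ (mul_nonneg hh hadd)
  simp only [sub_apply, map_sub, map_add] at htwo a₁ a₂ ⊢
  linarith

include hp hm hG₁ hG₂ in
lemma apply_le_of_norm_sub_eq_add (hdec : Fp - Fm = G₁ - G₂)
    (hnorm : ‖Fp - Fm‖ = ‖Fp‖ + ‖Fm‖) {h : C(K, ℝ)} (hh : 0 ≤ h) : Fp h ≤ G₁ h := by
  have hbound : ‖‖h‖ • (Fp - Fm)‖ ≤ ‖h‖ * (Fp 1 + Fm 1) + 2 * (G₁ h - Fp h) :=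
    ContinuousLinearMap.norm_le_of_forall_apply_le fun u hu =>
      norm_mul_apply_le_of_sub_eq_sub hp hm hG₁ hG₂ hdec hh hu
  have hsmul : ‖‖h‖ • (Fp - Fm)‖ = ‖h‖ * ‖Fp - Fm‖ := by
    simpa using NormedSpace.toNormSMulClass.norm_smul ‖h‖ (Fp - Fm)
  rw [hsmul, hnorm, ContinuousLinearMap.norm_eq_apply_one_of_nonneg hp,
    ContinuousLinearMap.norm_eq_apply_one_of_nonneg hm] at hbound
  linarith

end Minimality

lemma nonnegFunctional_iff {G : C(Set.Icc (0:ℝ) 1, ℝ) →L[ℝ] ℝ} :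
    NonnegFunctional G ↔ ∀ h, 0 ≤ h → 0 ≤ G h := by
  simp only [NonnegFunctional, ContinuousMap.le_def, ContinuousMap.zero_apply]

/-- A decomposition F = F⁺ - F⁻ into non-negative continuous linear
functionals is the minimal (Jordan) decomposition iff ‖F‖ = ‖F⁺‖ + ‖F⁻‖. -/
theorem jordan_decomposition_functional_iff_norm
    (F Fp Fm : C(Set.Icc (0:ℝ) 1, ℝ) →L[ℝ] ℝ)
    (hp : NonnegFunctional Fp) (hm : NonnegFunctional Fm)
    (hdec : F = Fp - Fm) :
    (∀ G₁ G₂ : C(Set.Icc (0:ℝ) 1, ℝ) →L[ℝ] ℝ,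
        NonnegFunctional G₁ → NonnegFunctional G₂ → F = G₁ - G₂ →
        NonnegFunctional (G₁ - Fp) ∧ NonnegFunctional (G₂ - Fm)) ↔
      ‖F‖ = ‖Fp‖ + ‖Fm‖ := by
  simp only [nonnegFunctional_iff] at hp hm ⊢
  subst hdec
  constructor
  · intro hmin
    obtain ⟨G₁, G₂, hG₁, hG₂, hdec, hle⟩ :=
      (Fp - Fm).exists_nonneg_sub_eq_and_apply_one_add_le_norm
    obtain ⟨h₁, h₂⟩ := hmin G₁ G₂ hG₁ hG₂ hdec
    have hFp : 0 ≤ G₁ 1 - Fp 1 := h₁ 1 zero_le_one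
    have hFm : 0 ≤ G₂ 1 - Fm 1 := h₂ 1 zero_le_one
    refine le_antisymm (norm_sub_le Fp Fm) ?_
    rw [ContinuousLinearMap.norm_eq_apply_one_of_nonneg hp,
      ContinuousLinearMap.norm_eq_apply_one_of_nonneg hm]
    linarith
  · intro hnorm G₁ G₂ hG₁ hG₂ hdec
    have hdec' : Fm - Fp = G₂ - G₁ := by rw [← neg_sub, hdec, neg_sub]
    have hnorm' : ‖Fm - Fp‖ = ‖Fm‖ + ‖Fp‖ :=
      (norm_sub_rev Fm Fp).trans (hnorm.trans (add_comm _ _))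
    exact ⟨fun h hh => sub_nonneg.2 (apply_le_of_norm_sub_eq_add hp hm hG₁ hG₂ hdec hnorm hh),
      fun h hh => sub_nonneg.2 (apply_le_of_norm_sub_eq_add hm hp hG₂ hG₁ hdec' hnorm' hh)⟩
end

section
/- Let g : [0,1] → ℝ be of bounded variation and left-continuous on (0,1), and let A ⊆ (0,1) be a dense set of continuity points of g. Then for every x ∈ (0,1], V_0^x(g) = sup{S(g,Z) : Z a partition of [0,x] with all interior points in A}, where S(g,Z) = Σ |g(x_i) - g(x_{i-1})|. -/
/-! Every sum over a partition of `[0, x]` is bounded by the variation, and the variation is the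
supremum of such sums (repeated points of a monotone sequence can be dropped, and the endpoints
added, without decreasing its sum). Conversely, moving each interior point of a partition slightly
to the left into `A` keeps the points ordered and, by left continuity of `g`, changes each value
of `g` by at most `δ`, hence the sum by at most `2 m δ`. -/

def IsPartitionOf (n : ℕ) (xs : ℕ → ℝ) (a b : ℝ) : Prop :=
  xs 0 = a ∧ xs n = b ∧ ∀ i < n, xs i < xs (i + 1)

open Set Filter Topology

noncomputable def variationSum (g : ℝ → ℝ) (n : ℕ) (xs : ℕ → ℝ) : ℝ :=
  ∑ i ∈ Finset.range n, |g (xs (i + 1)) - g (xs i)|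

section VariationSum

variable {g : ℝ → ℝ} {n : ℕ} {u : ℕ → ℝ}

theorem variationSum_nonneg : 0 ≤ variationSum g n u :=
  Finset.sum_nonneg fun _ _ => abs_nonneg _

theorem variationSum_succ :
    variationSum g (n + 1) u = |g (u 1) - g (u 0)| + variationSum g n (fun i => u (i + 1)) := by
  rw [variationSum, Finset.sum_range_succ', add_comm]
  rfl

theorem ofReal_variationSum :
    ENNReal.ofReal (variationSum g n u) =
      ∑ i ∈ Finset.range n, edist (g (u (i + 1))) (g (u i)) := by
  rw [variationSum, ENNReal.ofReal_sum_of_nonneg fun _ _ => abs_nonneg _]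
  simp only [edist_dist, Real.dist_eq]

theorem variationSum_le_add_of_abs_sub_le {v : ℕ → ℝ} {δ : ℝ}
    (huv : ∀ i ≤ n, |g (v i) - g (u i)| ≤ δ) :
    variationSum g n u ≤ variationSum g n v + 2 * n * δ := by
  have hterm : ∀ i ∈ Finset.range n,
      |g (u (i + 1)) - g (u i)| ≤ |g (v (i + 1)) - g (v i)| + 2 * δ := by
    intro i hi
    have h₁ := huv (i + 1) (Finset.mem_range.1 hi)
    have h₀ := huv i (Finset.mem_range.1 hi).le
    have t₁ := abs_sub_le (g (u (i + 1))) (g (v (i + 1))) (g (u i))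
    have t₀ := abs_sub_le (g (v (i + 1))) (g (v i)) (g (u i))
    rw [abs_sub_comm] at h₁
    linarith
  calc variationSum g n u ≤ ∑ i ∈ Finset.range n, (|g (v (i + 1)) - g (v i)| + 2 * δ) :=
        Finset.sum_le_sum hterm
    _ = variationSum g n v + 2 * n * δ := by
        rw [Finset.sum_add_distrib, Finset.sum_const, Finset.card_range, nsmul_eq_mul, variationSum]
        ring

end VariationSum

theorem exists_mem_near_left {g : ℝ → ℝ} {A : Set ℝ} {c y δ : ℝ}
    (hg : Tendsto g (𝓝[<] y) (𝓝 (g y))) (hA : Ioo c y ⊆ closure A) (hcy : c < y)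
    (hδ : 0 < δ) :
    ∃ z ∈ A, c < z ∧ z < y ∧ |g z - g y| < δ := by
  obtain ⟨l, hl, hnear⟩ :=
    (mem_nhdsLT_iff_exists_Ioo_subset' hcy).1 (Metric.tendsto_nhds.1 hg δ hδ)
  obtain ⟨w, hw⟩ := exists_between (max_lt hcy hl)
  obtain ⟨z, hzI, hzA⟩ := mem_closure_iff.1 (hA ⟨(le_max_left _ _).trans_lt hw.1, hw.2⟩)
    (Ioo (max c l) y) isOpen_Ioo ⟨hw.1, hw.2⟩
  refine ⟨z, hzA, (le_max_left _ _).trans_lt hzI.1, hzI.2, ?_⟩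
  rw [← Real.dist_eq]
  exact hnear ⟨(le_max_right _ _).trans_lt hzI.1, hzI.2⟩

namespace IsPartitionOf

variable {m : ℕ} {xs : ℕ → ℝ} {a b : ℝ}

theorem strictMonoOn (h : IsPartitionOf m xs a b) : StrictMonoOn xs (Iic m) :=
  strictMonoOn_Iic_of_lt_succ h.2.2

theorem le (h : IsPartitionOf m xs a b) : a ≤ b := by
  rw [← h.1, ← h.2.1]
  exact h.strictMonoOn.monotoneOn (Nat.zero_le m) self_mem_Iic (Nat.zero_le m)

theorem mem_Icc (h : IsPartitionOf m xs a b) {i : ℕ} (hi : i ≤ m) : xs i ∈ Icc a b := by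
  rw [← h.1, ← h.2.1]
  exact ⟨h.strictMonoOn.monotoneOn (Nat.zero_le m) hi (Nat.zero_le i),
    h.strictMonoOn.monotoneOn hi self_mem_Iic hi⟩

theorem mem_Ioo (h : IsPartitionOf m xs a b) {i : ℕ} (hi₀ : 0 < i) (him : i < m) :
    xs i ∈ Ioo a b := by
  rw [← h.1, ← h.2.1]
  exact ⟨h.strictMonoOn (Nat.zero_le m) him.le hi₀, h.strictMonoOn him.le self_mem_Iic him⟩

theorem variationSum_le {g : ℝ → ℝ} (hg : BoundedVariationOn g (Icc a b))
    (h : IsPartitionOf m xs a b) : variationSum g m xs ≤ variationOnFromTo g (Icc a b) a b := by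
  rw [variationOnFromTo.eq_of_le _ _ h.le, inter_self, ← ENNReal.ofReal_le_iff_le_toReal hg,
    ofReal_variationSum, Finset.range_eq_Ico]
  exact eVariationOn.sum_le_of_monotoneOn_Icc (h.strictMonoOn.monotoneOn.mono fun i hi => hi.2)
    fun i hi => h.mem_Icc hi.2

theorem exists_extend_left (g : ℝ → ℝ) {c : ℝ} (h : IsPartitionOf m xs c b)
    (hac : a ≤ c) :
    ∃ n ys, IsPartitionOf n ys a b ∧
      |g c - g a| + variationSum g m xs ≤ variationSum g n ys := by
  rcases hac.eq_or_lt with rfl | hac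
  · exact ⟨m, xs, h, by simp⟩
  refine ⟨m + 1, fun | 0 => a | i + 1 => xs i, ⟨rfl, h.2.1, ?_⟩, ?_⟩
  · rintro (_ | i) hi
    · simpa [h.1] using hac
    · exact h.2.2 i (by omega)
  · rw [variationSum_succ]
    simp [h.1]

theorem exists_interior_mem_of_abs_sub_le {g : ℝ → ℝ} {A : Set ℝ}
    (h : IsPartitionOf m xs a b) (hlc : ∀ y ∈ Ioo a b, Tendsto g (𝓝[<] y) (𝓝 (g y)))
    (hA : Ioo a b ⊆ closure A) {δ : ℝ} (hδ : 0 < δ) :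
    ∃ ys, IsPartitionOf m ys a b ∧ (∀ i, 0 < i → i < m → ys i ∈ A) ∧
      ∀ i ≤ m, |g (ys i) - g (xs i)| ≤ δ := by
  have hpick : ∀ i, ∃ z, 0 < i → i < m →
      z ∈ A ∧ xs (i - 1) < z ∧ z < xs i ∧ |g z - g (xs i)| < δ := by
    intro i
    by_cases hi : 0 < i ∧ i < m
    · have hprev : xs (i - 1) < xs i := by
        simpa [Nat.sub_add_cancel hi.1] using h.2.2 (i - 1) (by omega)
      obtain ⟨z, hz⟩ := exists_mem_near_left (hlc _ (h.mem_Ioo hi.1 hi.2))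
        ((Ioo_subset_Ioo (h.mem_Icc (by omega)).1 (h.mem_Ioo hi.1 hi.2).2.le).trans hA) hprev hδ
      exact ⟨z, fun _ _ => hz⟩
    · exact ⟨0, fun h₀ hm => absurd ⟨h₀, hm⟩ hi⟩
  choose z hz using hpick
  set ys : ℕ → ℝ := fun i => if 0 < i ∧ i < m then z i else xs i
  have hys_le : ∀ i, ys i ≤ xs i := by
    intro i
    by_cases hi : 0 < i ∧ i < m
    · simpa [ys, hi] using (hz i hi.1 hi.2).2.2.1.le
    · simp [ys, hi]
  have hlt_ys : ∀ i < m, xs i < ys (i + 1) := by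
    intro i hi
    by_cases hi' : i + 1 < m
    · simpa [ys, hi'] using (hz (i + 1) i.succ_pos hi').2.1
    · simpa [ys, hi'] using h.2.2 i hi
  have hys : IsPartitionOf m ys a b :=
    ⟨by simp [ys, h.1], by simp [ys, h.2.1], fun i hi => (hys_le i).trans_lt (hlt_ys i hi)⟩
  refine ⟨ys, hys, fun i h₀ hm => by simpa [ys, h₀, hm] using (hz i h₀ hm).1,
    fun i _ => ?_⟩
  by_cases hi : 0 < i ∧ i < m
  · simpa [ys, hi] using (hz i hi.1 hi.2).2.2.2.le
  · simpa [ys, hi] using hδ.le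

theorem exists_interior_mem_variationSum_le_add {g : ℝ → ℝ} {A : Set ℝ}
    (h : IsPartitionOf m xs a b) (hlc : ∀ y ∈ Ioo a b, Tendsto g (𝓝[<] y) (𝓝 (g y)))
    (hA : Ioo a b ⊆ closure A) {ε : ℝ} (hε : 0 < ε) :
    ∃ ys, IsPartitionOf m ys a b ∧ (∀ i, 0 < i → i < m → ys i ∈ A) ∧
      variationSum g m xs ≤ variationSum g m ys + ε := by
  obtain ⟨ys, hP, hysA, hclose⟩ :=
    h.exists_interior_mem_of_abs_sub_le hlc hA (show 0 < ε / (2 * m + 1) by positivity)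
  refine ⟨ys, hP, hysA, (variationSum_le_add_of_abs_sub_le hclose).trans ?_⟩
  have : 2 * m * (ε / (2 * m + 1)) ≤ ε := by
    rw [← mul_div_assoc, div_le_iff₀ (by positivity)]
    nlinarith
  linarith

end IsPartitionOf

theorem exists_isPartitionOf_variationSum_ge (g : ℝ → ℝ) {b : ℝ} (n : ℕ) :
    ∀ {a : ℝ} {u : ℕ → ℝ}, a ≤ b → Monotone u → (∀ i, u i ∈ Icc a b) →
      ∃ m xs, IsPartitionOf m xs a b ∧ variationSum g n u ≤ variationSum g m xs := by
  induction n with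
  | zero =>
    intro a u hab _ _
    obtain ⟨m, xs, hP, -⟩ :=
      (show IsPartitionOf 0 (fun _ => b) b b from ⟨rfl, rfl, by simp⟩).exists_extend_left g hab
    exact ⟨m, xs, hP, by rw [variationSum, Finset.sum_range_zero]; exact variationSum_nonneg⟩
  | succ n ih =>
    intro a u _ hu hus
    obtain ⟨m₁, xs₁, hP₁, hsum₁⟩ := ih (u := fun i => u (i + 1)) (hus 1).2
      (fun _ _ h => hu (by omega)) fun i => ⟨hu (by omega), (hus _).2⟩
    obtain ⟨m₂, xs₂, hP₂, hsum₂⟩ := hP₁.exists_extend_left g (hu (Nat.zero_le 1))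
    obtain ⟨m₃, xs₃, hP₃, hsum₃⟩ := hP₂.exists_extend_left g (hus 0).1
    refine ⟨m₃, xs₃, hP₃, ?_⟩
    rw [variationSum_succ]
    linarith [abs_nonneg (g (u 0) - g a)]

theorem variationOnFromTo_le_of_forall_isPartitionOf {g : ℝ → ℝ} {a b c : ℝ} (hab : a ≤ b)
    (hc : 0 ≤ c) (H : ∀ m xs, IsPartitionOf m xs a b → variationSum g m xs ≤ c) :
    variationOnFromTo g (Icc a b) a b ≤ c := by
  rw [variationOnFromTo.eq_of_le _ _ hab, inter_self]
  refine ENNReal.toReal_le_of_le_ofReal hc (iSup_le fun ⟨n, u, hu, hus⟩ => ?_)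
  obtain ⟨m, xs, hP, hsum⟩ := exists_isPartitionOf_variationSum_ge g n hab hu hus
  rw [← ofReal_variationSum]
  exact ENNReal.ofReal_le_ofReal (hsum.trans (H m xs hP))

theorem variation_eq_sup_over_partitions_from_dense_general (g : ℝ → ℝ) (A : Set ℝ)
    (hbv : BoundedVariationOn g (Set.Icc 0 1))
    (hlc : ∀ x ∈ Set.Ioo (0:ℝ) 1,
      Filter.Tendsto g (nhdsWithin x (Set.Iio x)) (nhds (g x)))
    (hdense : ∀ x ∈ Set.Ioo (0:ℝ) 1, x ∈ closure A) :
    ∀ x : ℝ, 0 < x → x ≤ 1 →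
      variationOnFromTo g (Set.Icc 0 x) 0 x
        = sSup {s : ℝ | ∃ (n : ℕ) (xs : ℕ → ℝ), IsPartitionOf n xs 0 x ∧
            (∀ i : ℕ, 0 < i → i < n → xs i ∈ A) ∧
            s = ∑ i ∈ Finset.range n, |g (xs (i + 1)) - g (xs i)|} := by
  intro x hx₀ hx₁
  have hsub : Ioo 0 x ⊆ Ioo (0 : ℝ) 1 := Ioo_subset_Ioo_right hx₁
  have hbvx : BoundedVariationOn g (Icc 0 x) := hbv.mono (Icc_subset_Icc_right hx₁)
  apply le_antisymm
  · refine variationOnFromTo_le_of_forall_isPartitionOf hx₀.le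
      (Real.sSup_nonneg fun _ ⟨_, _, _, _, hs⟩ => hs ▸ variationSum_nonneg) fun m xs hP => ?_
    refine le_of_forall_pos_le_add fun ε hε => ?_
    obtain ⟨ys, hys, hysA, hsum⟩ := hP.exists_interior_mem_variationSum_le_add
      (fun y hy => hlc y (hsub hy)) (fun y hy => hdense y (hsub hy)) hε
    refine hsum.trans (add_le_add_left ?_ ε)
    refine le_csSup ⟨variationOnFromTo g (Icc 0 x) 0 x, ?_⟩ ⟨m, ys, hys, hysA, rfl⟩
    rintro _ ⟨n, zs, hzs, -, rfl⟩
    exact hzs.variationSum_le hbvx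
  · refine Real.sSup_le ?_ (variationOnFromTo.nonneg_of_le _ _ hx₀.le)
    rintro _ ⟨n, zs, hzs, -, rfl⟩
    exact hzs.variationSum_le hbvx

/-- For g of bounded variation, left-continuous on (0,1), and a
dense set A of continuity points, the variation V₀ˣ(g) is the supremum of the
variation sums over partitions of [0,x] with all interior points in A. -/
theorem variation_eq_sup_over_partitions_from_dense (g : ℝ → ℝ) (A : Set ℝ)
    (hbv : BoundedVariationOn g (Set.Icc 0 1))
    (hlc : ∀ x ∈ Set.Ioo (0:ℝ) 1,
      Filter.Tendsto g (nhdsWithin x (Set.Iio x)) (nhds (g x)))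
    (hA : A ⊆ Set.Ioo 0 1)
    (hdense : ∀ x ∈ Set.Ioo (0:ℝ) 1, x ∈ closure A)
    (hcont : ∀ x ∈ A, ContinuousAt g x) :
    ∀ x : ℝ, 0 < x → x ≤ 1 →
      variationOnFromTo g (Set.Icc 0 x) 0 x
        = sSup {s : ℝ | ∃ (n : ℕ) (xs : ℕ → ℝ), IsPartitionOf n xs 0 x ∧
            (∀ i : ℕ, 0 < i → i < n → xs i ∈ A) ∧
            s = ∑ i ∈ Finset.range n, |g (xs (i + 1)) - g (xs i)|} :=
  variation_eq_sup_over_partitions_from_dense_general g A hbv hlc hdense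
end
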